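/- arXiv:2105.12004 — 6 statements merged into one kernel-verified Lean document; each statement's English description precedes it below -/
import Mathlib

section
/- Let (M, d) be a metric space, let x, y ∈ M with x ≠ y, and let γ : [0,1] → M be a continuous path from x to y. Then there exists an injective continuous path η : [0,1] → M from x to y with η([0,1]) ⊆ γ([0,1]) and ℓ(η) ≤ ℓ(γ), where ℓ denotes the length of a path (the supremum of sums Σ d(γ(t_k), γ(t_{k-1})) over all finite partitions of the domain). -/
open Set MeasureTheory ENNReal

section Defs

variable {M : Type*} [MetricSpace M]

/-- `γ` is a path in `E` from `x` to `y` parametrized on `[a,b]`. -/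
def IsPathIn (E : Set M) (γ : ℝ → M) (a b : ℝ) (x y : M) : Prop :=
  a ≤ b ∧ ContinuousOn γ (Set.Icc a b) ∧ γ a = x ∧ γ b = y ∧ ∀ t ∈ Set.Icc a b, γ t ∈ E

/-- Length of a path: total variation over `[a,b]`. -/
noncomputable def pathLength (γ : ℝ → M) (a b : ℝ) : ℝ≥0∞ := eVariationOn γ (Set.Icc a b)

/-- Intrinsic metric on `E`: infimum of lengths of finite-length paths in `E`. -/
noncomputable def intrinsicDist (E : Set M) (x y : M) : ℝ≥0∞ :=
  sInf { L | ∃ γ a b, IsPathIn E γ a b x y ∧ pathLength γ a b < ⊤ ∧ pathLength γ a b = L }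

/-- `Θ`-intrinsic metric relative to ambient set `N`: only paths whose intersection with `Θ`
has countable closure (closure taken in the subspace `N`) are allowed. -/
noncomputable def thetaDistIn (N Θ : Set M) (x y : M) : ℝ≥0∞ :=
  sInf { L | ∃ γ a b, IsPathIn N γ a b x y ∧ pathLength γ a b < ⊤ ∧
    (closure (γ '' Set.Icc a b ∩ Θ) ∩ N).Countable ∧ pathLength γ a b = L }

/-- `Θ`-finite intrinsic metric relative to ambient set `N`: only paths meeting `Θ` in finitely
many points are allowed. -/
noncomputable def thetaFinDistIn (N Θ : Set M) (x y : M) : ℝ≥0∞ :=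
  sInf { L | ∃ γ a b, IsPathIn N γ a b x y ∧ pathLength γ a b < ⊤ ∧
    (γ '' Set.Icc a b ∩ Θ).Finite ∧ pathLength γ a b = L }

/-- `Θ` is permeable relative to `N`. -/
def PermeableIn (N Θ : Set M) : Prop :=
  ∀ x ∈ N, ∀ y ∈ N, thetaDistIn N Θ x y = intrinsicDist N x y

/-- `Θ` is finitely permeable relative to `N`. -/
def FinitelyPermeableIn (N Θ : Set M) : Prop :=
  ∀ x ∈ N, ∀ y ∈ N, thetaFinDistIn N Θ x y = intrinsicDist N x y

/-- `Θ` is permeable (relative to the whole space). -/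
def Permeable (Θ : Set M) : Prop := PermeableIn Set.univ Θ

/-- `Θ` is finitely permeable (relative to the whole space). -/
def FinitelyPermeable (Θ : Set M) : Prop := FinitelyPermeableIn Set.univ Θ

end Defs

/-!
Loop erasure, then collapse of the intervals of constancy.

Call a closed set `K ⊆ [0,1]` containing `0` and `1` a loop erasure of `γ` if `γ` takes the same
value at the two ends of every gap of `K`. By compactness the intersection of a chain of loop
erasures is again one, so Zorn's lemma gives a minimal `K`. Following `γ` along `K` and jumping over
its gaps gives a continuous `γ ∘ φ` with `φ` monotone, and minimality makes every fibre of `γ ∘ φ`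
an interval. A continuous monotone gauge with the same fibres (a weighted sum, over a dense set of
`q`, of the diameters of the images of `[q, t]`) then lets `γ ∘ φ` factor through an injective path
on `[0,1]`. Both reparametrisations are monotone, so the length does not increase.
-/

open Set Metric Function Bornology

structure IsLoopErasure {X : Type*} (γ : ℝ → X) (K : Set ℝ) : Prop where
  isClosed : IsClosed K
  subset_Icc : K ⊆ Icc 0 1
  zero_mem : (0 : ℝ) ∈ K
  one_mem : (1 : ℝ) ∈ K
  eq_of_gap : ∀ a ∈ K, ∀ b ∈ K, a < b → K ∩ Ioo a b = ∅ → γ a = γ b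

theorem IsClosed.exists_gap_around {K : Set ℝ} (hK : IsClosed K) {a b p q : ℝ} (ha : a ∈ K)
    (hb : b ∈ K) (hap : a ≤ p) (hpq : p ≤ q) (hqb : q ≤ b) (hKpq : K ∩ Icc p q = ∅) :
    ∃ a' ∈ K, ∃ b' ∈ K, a ≤ a' ∧ a' < p ∧ q < b' ∧ b' ≤ b ∧ K ∩ Ioo a' b' = ∅ := by
  have hnot : ∀ t ∈ K, p ≤ t → q < t := fun t ht hpt =>
    lt_of_not_ge fun htq => (eq_empty_iff_forall_notMem.1 hKpq) t ⟨ht, hpt, htq⟩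
  obtain ⟨a', ⟨ha'K, ha'a, ha'p⟩, ha'max⟩ :=
    (isCompact_Icc.inter_left hK).exists_isGreatest ⟨a, ha, le_rfl, hap⟩
  obtain ⟨b', ⟨hb'K, hb'q, hb'b⟩, hb'min⟩ :=
    (isCompact_Icc.inter_left hK).exists_isLeast ⟨b, hb, hqb, le_rfl⟩
  have ha'p : a' < p := lt_of_le_of_ne ha'p fun h => (hnot a' ha'K h.ge).not_ge (h ▸ hpq)
  have hqb' : q < b' := lt_of_le_of_ne hb'q fun h => (hnot b' hb'K (h ▸ hpq)).ne h
  refine ⟨a', ha'K, b', hb'K, ha'a, ha'p, hqb', hb'b, eq_empty_iff_forall_notMem.2 ?_⟩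
  rintro t ⟨htK, ha't, htb'⟩
  rcases le_or_gt t p with htp | hpt
  · exact (ha'max ⟨htK, ha'a.trans ha't.le, htp⟩).not_gt ha't
  · exact (hb'min ⟨htK, (hnot t htK hpt.le).le, htb'.le.trans hb'b⟩).not_gt htb'

namespace IsLoopErasure

variable {X : Type*} {γ : ℝ → X} {K : Set ℝ}

theorem eq_of_gap_of_le (hK : IsLoopErasure γ K) {a b : ℝ} (ha : a ∈ K) (hb : b ∈ K)
    (hab : a ≤ b) (hgap : K ∩ Ioo a b = ∅) : γ a = γ b := by
  rcases hab.eq_or_lt with rfl | hlt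
  · rfl
  · exact hK.eq_of_gap a ha b hb hlt hgap

theorem Icc_zero_one (γ : ℝ → X) : IsLoopErasure γ (Icc 0 1) where
  isClosed := isClosed_Icc
  subset_Icc := subset_rfl
  zero_mem := left_mem_Icc.2 zero_le_one
  one_mem := right_mem_Icc.2 zero_le_one
  eq_of_gap a ha b hb hab hgap := by
    have hmid : (a + b) / 2 ∈ Icc (0 : ℝ) 1 ∩ Ioo a b :=
      ⟨⟨by linarith [ha.1], by linarith [hb.2]⟩, by linarith, by linarith⟩
    simp [hgap] at hmid

theorem diff_Ioo (hK : IsLoopErasure γ K) {s t : ℝ} (hs : s ∈ K) (ht : t ∈ K)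
    (hst : γ s = γ t) : IsLoopErasure γ (K \ Ioo s t) where
  isClosed := hK.isClosed.sdiff isOpen_Ioo
  subset_Icc := sdiff_subset.trans hK.subset_Icc
  zero_mem := ⟨hK.zero_mem, fun h => (hK.subset_Icc hs).1.not_gt h.1⟩
  one_mem := ⟨hK.one_mem, fun h => (hK.subset_Icc ht).2.not_gt h.2⟩
  eq_of_gap a ha b hb hab hgap := by
    by_cases hKab : K ∩ Ioo a b = ∅
    · exact hK.eq_of_gap a ha.1 b hb.1 hab hKab
    -- otherwise the gap of `K \ Ioo s t` swallows `Ioo s t`, and `γ a = γ s = γ t = γ b`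
    obtain ⟨u, huK, hau, hub⟩ := nonempty_iff_ne_empty.2 hKab
    have hu : u ∈ Ioo s t := by_contra fun h => (hgap.subset ⟨⟨huK, h⟩, hau, hub⟩)
    have has : a ≤ s := le_of_not_gt fun h => ha.2 ⟨h, hau.trans hu.2⟩
    have htb : t ≤ b := le_of_not_gt fun h => hb.2 ⟨hu.1.trans hub, h⟩
    have hsub : ∀ v ∈ K, a < v → v < b → v ∈ Ioo s t := fun v hv hav hvb =>
      by_contra fun h => hgap.subset ⟨⟨hv, h⟩, hav, hvb⟩
    have has' : K ∩ Ioo a s = ∅ := eq_empty_iff_forall_notMem.2 fun v ⟨hv, hav, hvs⟩ =>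
      (hsub v hv hav (hvs.trans (hu.1.trans hub))).1.not_gt hvs
    have htb' : K ∩ Ioo t b = ∅ := eq_empty_iff_forall_notMem.2 fun v ⟨hv, htv, hvb⟩ =>
      (hsub v hv ((hau.trans hu.2).trans htv) hvb).2.not_gt htv
    calc γ a = γ s := hK.eq_of_gap_of_le ha.1 hs has has'
      _ = γ t := hst
      _ = γ b := hK.eq_of_gap_of_le ht hb.1 htb htb'

theorem sInter [TopologicalSpace X] [T2Space X] (hγ : ContinuousOn γ (Icc 0 1))
    {c : Set (Set ℝ)} (hc : ∀ K ∈ c, IsLoopErasure γ K) (hchain : IsChain (· ⊆ ·) c)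
    (hne : c.Nonempty) : IsLoopErasure γ (⋂₀ c) := by
  obtain ⟨K₀, hK₀⟩ := hne
  have hsub : ⋂₀ c ⊆ Icc 0 1 := (sInter_subset_of_mem hK₀).trans (hc K₀ hK₀).subset_Icc
  refine ⟨isClosed_sInter fun K hK => (hc K hK).isClosed, hsub,
    fun K hK => (hc K hK).zero_mem, fun K hK => (hc K hK).one_mem, ?_⟩
  intro a ha b hb hab hgap
  by_contra hγab
  obtain ⟨U, V, hU, hV, haU, hbV, hUV⟩ := t2_separation hγab
  obtain ⟨δa, hδa, hUa⟩ := Metric.mem_nhdsWithin_iff.1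
    ((hγ a (hsub ha)).preimage_mem_nhdsWithin (hU.mem_nhds haU))
  obtain ⟨δb, hδb, hVb⟩ := Metric.mem_nhdsWithin_iff.1
    ((hγ b (hsub hb)).preimage_mem_nhdsWithin (hV.mem_nhds hbV))
  set δ := min (min δa δb) ((b - a) / 2)
  have hδ : 0 < δ := lt_min (lt_min hδa hδb) (by linarith)
  have hδa' : δ ≤ δa := (min_le_left _ _).trans (min_le_left _ _)
  have hδb' : δ ≤ δb := (min_le_left _ _).trans (min_le_right _ _)
  have hδab : δ ≤ (b - a) / 2 := min_le_right _ _
  -- by compactness a single member of the chain already misses `[a + δ, b - δ]`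
  have : Nonempty c := ⟨⟨K₀, hK₀⟩⟩
  obtain ⟨⟨K, hKc⟩, hKδ⟩ := (isCompact_Icc (a := a + δ) (b := b - δ)).elim_directed_family_closed
    (fun K : c => (K : Set ℝ)) (fun K => (hc K K.2).isClosed) (by
      rw [← sInter_eq_iInter, eq_empty_iff_forall_notMem]
      exact fun t ⟨ht, htc⟩ => hgap.subset ⟨htc, by linarith [ht.1], by linarith [ht.2]⟩)
    (IsChain.directed (f := id) hchain.symm)
  obtain ⟨a', ha'K, b', hb'K, haa', ha'δ, hb'δ, hb'b, hgap'⟩ :=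
    (hc K hKc).isClosed.exists_gap_around (ha K hKc) (hb K hKc) (le_add_of_nonneg_right hδ.le)
      (by linarith) (sub_le_self _ hδ.le) ((inter_comm _ _).trans hKδ)
  have ha'U : γ a' ∈ U := hUa ⟨by rw [Real.ball_eq_Ioo]; constructor <;> linarith,
    (hc K hKc).subset_Icc ha'K⟩
  have hb'V : γ b' ∈ V := hVb ⟨by rw [Real.ball_eq_Ioo]; constructor <;> linarith,
    (hc K hKc).subset_Icc hb'K⟩
  rw [(hc K hKc).eq_of_gap a' ha'K b' hb'K (by linarith) hgap'] at ha'U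
  exact hUV.ne_of_mem ha'U hb'V rfl

theorem exists_minimal [TopologicalSpace X] [T2Space X] (hγ : ContinuousOn γ (Icc 0 1)) :
    ∃ K, Minimal (IsLoopErasure γ) K := by
  refine zorn_superset {K | IsLoopErasure γ K} fun c hc hchain => ?_
  rcases c.eq_empty_or_nonempty with rfl | hne
  · exact ⟨Icc 0 1, Icc_zero_one γ, fun _ h => h.elim⟩
  · exact ⟨⋂₀ c, sInter hγ hc hchain hne, fun _ => sInter_subset_of_mem⟩

theorem inter_Ioo_eq_empty_of_minimal (hK : Minimal (IsLoopErasure γ) K) {s t : ℝ} (hs : s ∈ K)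
    (ht : t ∈ K) (hst : γ s = γ t) : K ∩ Ioo s t = ∅ := by
  have hdiff := hK.eq_of_subset (hK.prop.diff_Ioo hs ht hst) sdiff_subset
  rw [eq_empty_iff_forall_notMem]
  rintro u ⟨huK, hu⟩
  exact (hdiff ▸ huK).2 hu

end IsLoopErasure

-- The last point of `K` up to time `t`; for `t < 0` this is `sSup ∅ = 0`, which still lies in `K`.
noncomputable def floorIn (K : Set ℝ) (t : ℝ) : ℝ := sSup (K ∩ Iic t)

section floorIn

variable {K : Set ℝ}

theorem floorIn_of_neg (hK : K ⊆ Icc 0 1) {t : ℝ} (ht : t < 0) : floorIn K t = 0 := by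
  have hempty : K ∩ Iic t = ∅ :=
    eq_empty_iff_forall_notMem.2 fun u hu => ((hK hu.1).1.trans hu.2).not_gt ht
  rw [floorIn, hempty, Real.sSup_empty]

theorem le_floorIn {k t : ℝ} (hk : k ∈ K) (hkt : k ≤ t) : k ≤ floorIn K t :=
  le_csSup ⟨t, fun _ hu => hu.2⟩ ⟨hk, hkt⟩

theorem floorIn_le (h0 : (0 : ℝ) ∈ K) {t : ℝ} (ht : 0 ≤ t) : floorIn K t ≤ t :=
  csSup_le ⟨0, h0, ht⟩ fun _ hu => hu.2

theorem floorIn_mem (hKc : IsClosed K) (hK : K ⊆ Icc 0 1) (h0 : (0 : ℝ) ∈ K) (t : ℝ) :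
    floorIn K t ∈ K := by
  rcases lt_or_ge t 0 with ht | ht
  · rwa [floorIn_of_neg hK ht]
  · exact ((hKc.inter isClosed_Iic).csSup_mem ⟨0, h0, ht⟩ ⟨t, fun _ hu => hu.2⟩).1

theorem floorIn_eq_self (hK : K ⊆ Icc 0 1) (h0 : (0 : ℝ) ∈ K) {t : ℝ} (ht : t ∈ K) :
    floorIn K t = t :=
  (floorIn_le h0 (hK ht).1).antisymm (le_floorIn ht le_rfl)

theorem monotone_floorIn (hKc : IsClosed K) (hK : K ⊆ Icc 0 1) (h0 : (0 : ℝ) ∈ K) :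
    Monotone (floorIn K) := by
  intro u v huv
  rcases lt_or_ge u 0 with hu | hu
  · rw [floorIn_of_neg hK hu]
    exact (hK (floorIn_mem hKc hK h0 v)).1
  · exact csSup_le_csSup ⟨v, fun _ hw => hw.2⟩ ⟨0, h0, hu⟩
      (inter_subset_inter_right _ (Iic_subset_Iic.2 huv))

end floorIn

namespace IsLoopErasure

variable {X : Type*} {γ : ℝ → X} {K : Set ℝ}

theorem floorIn_eq_or_exists (hK : IsLoopErasure γ K) {u v : ℝ} (hvu : v ≤ u) :
    floorIn K u = floorIn K v ∨
      ∃ c ∈ K, v ≤ c ∧ c ≤ floorIn K u ∧ floorIn K u ≤ u ∧ γ (floorIn K v) = γ c := by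
  by_cases h : ∃ k ∈ K, v < k ∧ k ≤ u
  · obtain ⟨k, hkK, hvk, hku⟩ := h
    obtain ⟨c, ⟨hcK, hvc, hcu⟩, hcmin⟩ :=
      (isCompact_Icc.inter_left hK.isClosed).exists_isLeast ⟨k, hkK, hvk.le, hku⟩
    have hvK : floorIn K v ∈ K := floorIn_mem hK.isClosed hK.subset_Icc hK.zero_mem v
    have hvc' : floorIn K v ≤ c := by
      calc floorIn K v ≤ floorIn K c := monotone_floorIn hK.isClosed hK.subset_Icc hK.zero_mem hvc
        _ = c := floorIn_eq_self hK.subset_Icc hK.zero_mem hcK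
    have hgap : K ∩ Ioo (floorIn K v) c = ∅ := by
      refine eq_empty_iff_forall_notMem.2 fun m ⟨hmK, hvm, hmc⟩ => ?_
      rcases le_or_gt m v with hmv | hvm'
      · exact (le_floorIn hmK hmv).not_gt hvm
      · exact (hcmin ⟨hmK, hvm'.le, hmc.le.trans hcu⟩).not_gt hmc
    exact Or.inr ⟨c, hcK, hvc, le_floorIn hcK hcu,
      floorIn_le hK.zero_mem ((hK.subset_Icc hcK).1.trans hcu),
      hK.eq_of_gap_of_le hvK hcK hvc' hgap⟩
  · push Not at h
    refine Or.inl (congrArg sSup (ext fun k => and_congr_right fun hk => ?_))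
    exact ⟨fun hku => le_of_not_gt fun hvk => (h k hk hvk).not_ge hku, fun hkv => hkv.trans hvu⟩

theorem uniformContinuous_comp_floorIn [PseudoMetricSpace X] (hK : IsLoopErasure γ K)
    (hγ : ContinuousOn γ (Icc 0 1)) : UniformContinuous (γ ∘ floorIn K) := by
  rw [Metric.uniformContinuous_iff]
  intro ε hε
  obtain ⟨δ, hδ, hγδ⟩ := Metric.uniformContinuousOn_iff.1
    (isCompact_Icc.uniformContinuousOn_of_continuous hγ) ε hε
  have key : ∀ u v, v ≤ u → u - v < δ → dist (γ (floorIn K u)) (γ (floorIn K v)) < ε := by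
    intro u v hvu huv
    rcases hK.floorIn_eq_or_exists hvu with h | ⟨c, hcK, hvc, hcu, hu, hγc⟩
    · rw [h, dist_self]
      exact hε
    · rw [hγc]
      refine hγδ _ (hK.subset_Icc (floorIn_mem hK.isClosed hK.subset_Icc hK.zero_mem u)) _
        (hK.subset_Icc hcK) ?_
      rw [Real.dist_eq, abs_lt]
      constructor <;> linarith
  refine ⟨δ, hδ, fun u v huv => ?_⟩
  rw [Real.dist_eq, abs_lt] at huv
  rcases le_total v u with h | h
  · exact key u v h (by linarith)
  · rw [dist_comm]
    exact key v u h (by linarith)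

theorem ordConnected_preimage_comp_floorIn (hK : Minimal (IsLoopErasure γ) K) (y : X) :
    ((γ ∘ floorIn K) ⁻¹' {y}).OrdConnected := by
  obtain ⟨hKc, hKI, h0, -, -⟩ := hK.prop
  have hmono := monotone_floorIn hKc hKI h0
  refine ⟨fun a ha b hb t ht => ?_⟩
  have hgap := inter_Ioo_eq_empty_of_minimal hK (floorIn_mem hKc hKI h0 a)
    (floorIn_mem hKc hKI h0 b) (ha.trans hb.symm)
  rcases (hmono ht.1).eq_or_lt with hat | hat
  · rwa [mem_preimage, comp_apply, ← hat]
  rcases (hmono ht.2).eq_or_lt with htb | htb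
  · rwa [mem_preimage, comp_apply, htb]
  exact (hgap.subset ⟨floorIn_mem hKc hKI h0 t, hat, htb⟩).elim

end IsLoopErasure

theorem exists_loopErasure_reparam {X : Type*} [MetricSpace X] {γ : ℝ → X}
    (hγ : ContinuousOn γ (Icc 0 1)) :
    ∃ φ : ℝ → ℝ, Monotone φ ∧ (∀ t, φ t ∈ Icc 0 1) ∧ φ 0 = 0 ∧ φ 1 = 1 ∧
      Continuous (γ ∘ φ) ∧ ∀ y, ((γ ∘ φ) ⁻¹' {y}).OrdConnected := by
  obtain ⟨K, hK⟩ := IsLoopErasure.exists_minimal hγ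
  obtain ⟨hKc, hKI, h0, h1, -⟩ := hK.prop
  exact ⟨floorIn K, monotone_floorIn hKc hKI h0, fun t => hKI (floorIn_mem hKc hKI h0 t),
    floorIn_eq_self hKI h0 h0, floorIn_eq_self hKI h0 h1,
    (hK.prop.uniformContinuous_comp_floorIn hγ).continuous,
    IsLoopErasure.ordConnected_preimage_comp_floorIn hK⟩

section DiamImageIcc

variable {X : Type*} [PseudoMetricSpace X] {η : ℝ → X}

theorem monotone_diam_image_Icc (hη : Continuous η) (q : ℝ) :
    Monotone fun t => diam (η '' Icc q t) := fun _ _ htt' =>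
  diam_mono (image_mono (Icc_subset_Icc_right htt')) (isCompact_Icc.image hη).isBounded

theorem diam_image_Icc_le_add (hη : Continuous η) (q : ℝ) {t t' : ℝ} (htt' : t ≤ t') :
    diam (η '' Icc q t') ≤ diam (η '' Icc q t) + diam (η '' Icc t t') := by
  rcases le_total q t with hqt | htq
  · rw [← Icc_union_Icc_eq_Icc hqt htt', image_union]
    exact diam_union' ⟨η t, mem_image_of_mem _ ⟨hqt, le_rfl⟩, mem_image_of_mem _ ⟨le_rfl, htt'⟩⟩
  · calc diam (η '' Icc q t') ≤ diam (η '' Icc t t') :=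
          diam_mono (image_mono (Icc_subset_Icc_left htq)) (isCompact_Icc.image hη).isBounded
      _ ≤ diam (η '' Icc q t) + diam (η '' Icc t t') := le_add_of_nonneg_left diam_nonneg

theorem continuous_diam_image_Icc (hη : Continuous η) (q : ℝ) :
    Continuous fun t => diam (η '' Icc q t) := by
  rw [Metric.continuous_iff]
  intro t₀ ε hε
  obtain ⟨δ, hδ, hηδ⟩ := Metric.continuous_iff.1 hη t₀ (ε / 3) (by positivity)
  have hsmall : ∀ {u v}, dist u t₀ < δ → dist v t₀ < δ → diam (η '' Icc u v) < ε := by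
    intro u v hu hv
    refine (diam_le_of_forall_dist_le (by positivity) ?_).trans_lt (by linarith : 2 * (ε / 3) < ε)
    rintro _ ⟨x, hx, rfl⟩ _ ⟨y, hy, rfl⟩
    rw [Real.dist_eq, abs_lt] at hu hv
    have hxt : dist (η x) (η t₀) < ε / 3 :=
      hηδ x (by rw [Real.dist_eq, abs_lt]; constructor <;> linarith [hx.1, hx.2])
    have hyt : dist (η y) (η t₀) < ε / 3 :=
      hηδ y (by rw [Real.dist_eq, abs_lt]; constructor <;> linarith [hy.1, hy.2])
    linarith [dist_triangle_right (η x) (η y) (η t₀)]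
  refine ⟨δ, hδ, fun t ht => ?_⟩
  rw [Real.dist_eq, abs_lt]
  rcases le_total t t₀ with h | h
  · have := diam_image_Icc_le_add hη q h
    have := monotone_diam_image_Icc hη q h
    have := hsmall ht (dist_self t₀ ▸ hδ)
    constructor <;> linarith
  · have := diam_image_Icc_le_add hη q h
    have := monotone_diam_image_Icc hη q h
    have := hsmall (dist_self t₀ ▸ hδ) ht
    constructor <;> linarith

end DiamImageIcc

noncomputable def fiberGauge {X : Type*} [PseudoMetricSpace X] (η : ℝ → X) (u : ℕ → ℝ) (t : ℝ) :
    ℝ :=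
  ∑' n, (1 / 2 : ℝ) ^ n * diam (η '' Icc (u n) t)

section fiberGauge

variable {X : Type*} [MetricSpace X] {η : ℝ → X} {u : ℕ → ℝ}

theorem fiberGauge_term_le (hb : IsBounded (range η)) (n : ℕ) (t : ℝ) :
    (1 / 2 : ℝ) ^ n * diam (η '' Icc (u n) t) ≤ (1 / 2 : ℝ) ^ n * diam (range η) :=
  mul_le_mul_of_nonneg_left (diam_mono (image_subset_range _ _) hb) (by positivity)

theorem summable_fiberGauge (hb : IsBounded (range η)) (t : ℝ) :
    Summable fun n => (1 / 2 : ℝ) ^ n * diam (η '' Icc (u n) t) :=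
  .of_nonneg_of_le (fun _ => mul_nonneg (by positivity) diam_nonneg) (fiberGauge_term_le hb · t)
    (summable_geometric_two.mul_right _)

theorem continuous_fiberGauge (hη : Continuous η) (hb : IsBounded (range η)) :
    Continuous (fiberGauge η u) :=
  continuous_tsum (fun _ => continuous_const.mul (continuous_diam_image_Icc hη _))
    (summable_geometric_two.mul_right (diam (range η))) fun n t => by
      rw [Real.norm_of_nonneg (mul_nonneg (by positivity) diam_nonneg)]
      exact fiberGauge_term_le hb n t

theorem monotone_fiberGauge (hη : Continuous η) (hb : IsBounded (range η)) :
    Monotone (fiberGauge η u) := fun t t' h =>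
  Summable.tsum_le_tsum
    (fun _ => mul_le_mul_of_nonneg_left (monotone_diam_image_Icc hη _ h) (by positivity))
    (summable_fiberGauge hb t) (summable_fiberGauge hb t')

theorem fiberGauge_eq_of_forall_eq (hη : Continuous η) {a b : ℝ} (hab : a ≤ b)
    (hconst : ∀ t ∈ Icc a b, η t = η a) : fiberGauge η u a = fiberGauge η u b := by
  have hdiam : diam (η '' Icc a b) = 0 := diam_subsingleton <| by
    rintro _ ⟨x, hx, rfl⟩ _ ⟨y, hy, rfl⟩
    rw [hconst x hx, hconst y hy]
  refine tsum_congr fun n => congrArg _ (le_antisymm (monotone_diam_image_Icc hη _ hab) ?_)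
  simpa [hdiam] using diam_image_Icc_le_add hη (u n) hab

theorem fiberGauge_lt (hu : DenseRange u) (hη : Continuous η) (hb : IsBounded (range η))
    {a b w : ℝ} (hw : w ∈ Icc a b) (hne : η w ≠ η a) : fiberGauge η u a < fiberGauge η u b := by
  have haw : a < w := hw.1.lt_of_ne fun h => hne (h ▸ rfl)
  -- a starting time `u n` just after `a` sees `η` move between `u n` and `b`, but not up to `a`
  have hopen : IsOpen ({x | η x ≠ η w} ∩ Ioo a w) :=
    (isOpen_ne_fun hη continuous_const).inter isOpen_Ioo
  have hne' : ({x | η x ≠ η w} ∩ Ioo a w).Nonempty := Filter.nonempty_of_mem <|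
    Filter.inter_mem (nhdsWithin_le_nhds ((isOpen_ne_fun hη continuous_const).mem_nhds hne.symm))
      (Ioo_mem_nhdsGT haw)
  obtain ⟨n, hn, hna, hnw⟩ := hu.exists_mem_open hopen hne'
  have hzero : diam (η '' Icc (u n) a) = 0 := by
    rw [Icc_eq_empty hna.not_ge, image_empty, diam_empty]
  have hpos : 0 < diam (η '' Icc (u n) b) :=
    (dist_pos.2 hn).trans_le <| dist_le_diam_of_mem (isCompact_Icc.image hη).isBounded
      (mem_image_of_mem η ⟨le_rfl, hnw.le.trans hw.2⟩) (mem_image_of_mem η ⟨hnw.le, hw.2⟩)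
  refine Summable.tsum_lt_tsum (i := n)
    (fun _ => mul_le_mul_of_nonneg_left (monotone_diam_image_Icc hη _ (hw.1.trans hw.2))
      (by positivity)) ?_ (summable_fiberGauge hb a) (summable_fiberGauge hb b)
  rw [hzero, mul_zero]
  exact mul_pos (by positivity) hpos

theorem fiberGauge_eq_iff (hu : DenseRange u) (hη : Continuous η) (hb : IsBounded (range η))
    {a b : ℝ} (hab : a ≤ b) : fiberGauge η u a = fiberGauge η u b ↔ ∀ t ∈ Icc a b, η t = η a := by
  refine ⟨fun h => ?_, fiberGauge_eq_of_forall_eq hη hab⟩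
  by_contra! ⟨w, hw, hne⟩
  exact (fiberGauge_lt hu hη hb hw hne).ne h

theorem fiberGauge_eq_iff_of_ordConnected (hu : DenseRange u) (hη : Continuous η)
    (hb : IsBounded (range η)) (hfib : ∀ y, (η ⁻¹' {y}).OrdConnected) (a b : ℝ) :
    fiberGauge η u a = fiberGauge η u b ↔ η a = η b := by
  wlog hab : a ≤ b generalizing a b
  · rw [eq_comm, @eq_comm _ (η a)]
    exact this b a (le_of_not_ge hab)
  rw [fiberGauge_eq_iff hu hη hb hab]
  exact ⟨fun h => (h b ⟨hab, le_rfl⟩).symm, fun h t ht => (hfib (η a)).out rfl h.symm ht⟩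

end fiberGauge

theorem continuousOn_image_of_comp_eq {X Y Z : Type*} [TopologicalSpace X] [TopologicalSpace Y]
    [T2Space Y] [TopologicalSpace Z] {A : Set X} {f : X → Y} {g : X → Z} {h : Y → Z}
    (hA : IsCompact A) (hAc : IsClosed A) (hf : ContinuousOn f A) (hg : ContinuousOn g A)
    (hfg : ∀ a ∈ A, h (f a) = g a) : ContinuousOn h (f '' A) := by
  rw [continuousOn_iff_isClosed]
  intro C hC
  refine ⟨f '' (A ∩ g ⁻¹' C), ?_, ?_⟩
  · exact ((hA.of_isClosed_subset (hg.preimage_isClosed_of_isClosed hAc hC)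
      inter_subset_left).image_of_continuousOn (hf.mono inter_subset_left)).isClosed
  ext y
  constructor
  · rintro ⟨hyC, a, ha, rfl⟩
    exact ⟨⟨a, ⟨ha, by rwa [mem_preimage, ← hfg a ha]⟩, rfl⟩, a, ha, rfl⟩
  · rintro ⟨⟨a, ⟨ha, hga⟩, rfl⟩, hy⟩
    exact ⟨by rwa [mem_preimage, hfg a ha], hy⟩

theorem exists_injOn_reparam_of_eq_iff {X : Type*} [TopologicalSpace X] {η : ℝ → X}
    {s : ℝ → ℝ} (hs : Continuous s) (hsm : Monotone s) (hη : ContinuousOn η (Icc 0 1))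
    (heq : ∀ a ∈ Icc (0 : ℝ) 1, ∀ b ∈ Icc (0 : ℝ) 1, η a = η b ↔ s a = s b)
    (h01 : η 0 ≠ η 1) :
    ∃ ρ : ℝ → ℝ, MonotoneOn ρ (Icc 0 1) ∧ ContinuousOn (η ∘ ρ) (Icc 0 1) ∧
      InjOn (η ∘ ρ) (Icc 0 1) ∧ η (ρ 0) = η 0 ∧ η (ρ 1) = η 1 := by
  have hI0 : (0 : ℝ) ∈ Icc (0 : ℝ) 1 := left_mem_Icc.2 zero_le_one
  have hI1 : (1 : ℝ) ∈ Icc (0 : ℝ) 1 := right_mem_Icc.2 zero_le_one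
  have hs01 : s 0 < s 1 := (hsm zero_le_one).lt_of_ne fun h => h01 ((heq 0 hI0 1 hI1).2 h)
  set L : ℝ → ℝ := fun w => s 0 + w * (s 1 - s 0)
  have hLinj : Injective L := fun w w' h =>
    mul_right_cancel₀ (sub_pos.2 hs01).ne' (add_left_cancel h)
  have hLmono : Monotone L := fun w w' h =>
    add_le_add_right (mul_le_mul_of_nonneg_right h (sub_pos.2 hs01).le) _
  have hLmaps : MapsTo L (Icc 0 1) (s '' Icc 0 1) := fun w hw =>
    intermediate_value_Icc zero_le_one hs.continuousOn
      ⟨by nlinarith [hw.1], by nlinarith [hw.2]⟩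
  set σ := invFunOn s (Icc 0 1)
  have hσ : ∀ y ∈ s '' Icc 0 1, σ y ∈ Icc 0 1 ∧ s (σ y) = y := fun y hy =>
    ⟨invFunOn_mem hy, invFunOn_eq hy⟩
  refine ⟨σ ∘ L, ?_, ?_, ?_, ?_, ?_⟩
  · intro w hw w' hw' hww'
    by_contra! hlt
    have hL : L w' ≤ L w := by
      simpa only [comp_apply, (hσ _ (hLmaps hw)).2, (hσ _ (hLmaps hw')).2] using hsm hlt.le
    rw [hLinj ((hLmono hww').antisymm hL)] at hlt
    exact hlt.false
  · refine ContinuousOn.comp (g := η ∘ σ) ?_ (by fun_prop : Continuous L).continuousOn hLmaps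
    exact continuousOn_image_of_comp_eq isCompact_Icc isClosed_Icc hs.continuousOn hη
      fun a ha => (heq _ (hσ _ ⟨a, ha, rfl⟩).1 a ha).2 (hσ _ ⟨a, ha, rfl⟩).2
  · intro w hw w' hw' h
    apply hLinj
    rw [← (hσ _ (hLmaps hw)).2, ← (hσ _ (hLmaps hw')).2]
    exact (heq _ (hσ _ (hLmaps hw)).1 _ (hσ _ (hLmaps hw')).1).1 h
  · exact (heq _ (hσ _ (hLmaps hI0)).1 0 hI0).2 ((hσ _ (hLmaps hI0)).2.trans (by simp [L]))
  · exact (heq _ (hσ _ (hLmaps hI1)).1 1 hI1).2 ((hσ _ (hLmaps hI1)).2.trans (by simp [L]))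

theorem exists_injOn_reparam_of_ordConnected {X : Type*} [MetricSpace X] {η : ℝ → X}
    (hη : Continuous η) (hb : IsBounded (range η)) (hfib : ∀ y, (η ⁻¹' {y}).OrdConnected)
    (h01 : η 0 ≠ η 1) :
    ∃ ρ : ℝ → ℝ, MonotoneOn ρ (Icc 0 1) ∧ ContinuousOn (η ∘ ρ) (Icc 0 1) ∧
      InjOn (η ∘ ρ) (Icc 0 1) ∧ η (ρ 0) = η 0 ∧ η (ρ 1) = η 1 := by
  obtain ⟨u, hu⟩ := TopologicalSpace.exists_dense_seq ℝ
  exact exists_injOn_reparam_of_eq_iff (continuous_fiberGauge (u := u) hη hb)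
    (monotone_fiberGauge hη hb) hη.continuousOn
    (fun a _ b _ => (fiberGauge_eq_iff_of_ordConnected hu hη hb hfib a b).symm) h01

/-- Any finite-or-infinite-length path between distinct points can be replaced by an injective
path (arc) with image contained in the original image and length at most the original length. -/
theorem stmt1 {M : Type*} [MetricSpace M] (x y : M) (hxy : x ≠ y)
    (γ : ℝ → M) (hγ : ContinuousOn γ (Set.Icc 0 1)) (h0 : γ 0 = x) (h1 : γ 1 = y) :
    ∃ η : ℝ → M, ContinuousOn η (Set.Icc 0 1) ∧ η 0 = x ∧ η 1 = y ∧
      Set.InjOn η (Set.Icc 0 1) ∧ η '' Set.Icc 0 1 ⊆ γ '' Set.Icc 0 1 ∧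
      pathLength η 0 1 ≤ pathLength γ 0 1 := by
  obtain ⟨φ, hφ, hφI, hφ0, hφ1, hcont, hfib⟩ := exists_loopErasure_reparam hγ
  have hb : IsBounded (range (γ ∘ φ)) :=
    (isCompact_Icc.image_of_continuousOn hγ).isBounded.subset
      (range_subset_iff.2 fun t => mem_image_of_mem γ (hφI t))
  have h01 : (γ ∘ φ) 0 ≠ (γ ∘ φ) 1 := by simpa [hφ0, hφ1, h0, h1] using hxy
  obtain ⟨ρ, hρ, hcont', hinj, hρ0, hρ1⟩ :=
    exists_injOn_reparam_of_ordConnected hcont hb hfib h01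
  refine ⟨γ ∘ φ ∘ ρ, hcont', ?_, ?_, hinj, ?_, ?_⟩
  · simpa [hφ0, h0] using hρ0
  · simpa [hφ1, h1] using hρ1
  · rintro _ ⟨w, -, rfl⟩
    exact mem_image_of_mem γ (hφI _)
  · exact eVariationOn.comp_le_of_monotoneOn γ (φ ∘ ρ) (hφ.comp_monotoneOn hρ) fun _ _ => hφI _
end

section
/- Let (M, d) be a metric space with at least two points such that ρ_M(x,y) < ∞ for all x, y ∈ M, where ρ_M is the intrinsic (length) metric. If Θ ⊆ M is permeable, then Θ has empty interior with respect to the metric d. -/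
open Set MeasureTheory ENNReal

/-- In a metric space with at least two points in which all intrinsic distances are finite,
a permeable set has empty interior. -/
theorem stmt2 {M : Type*} [MetricSpace M] [Nontrivial M]
    (hfin : ∀ x y : M, intrinsicDist Set.univ x y < ⊤)
    (Θ : Set M) (hΘ : Permeable Θ) : interior Θ = ∅ := by
  by_contra h
  obtain ⟨z, hz⟩ := Set.nonempty_iff_ne_empty.mpr h
  obtain ⟨ε, hε, hball⟩ := Metric.mem_nhds_iff.mp (mem_interior_iff_mem_nhds.mp hz)
  obtain ⟨y, hy⟩ := exists_ne z
  set r : ℝ := min ε (dist y z) with hr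
  have hr0 : 0 < r := lt_min hε (dist_pos.mpr hy)
  have hlt : thetaDistIn Set.univ Θ z y < ⊤ := by
    rw [hΘ z trivial y trivial]; exact hfin z y
  obtain ⟨L, hLmem, -⟩ := sInf_lt_iff.mp hlt
  obtain ⟨γ, a, b, hpath, hlen, hcnt, -⟩ := hLmem
  obtain ⟨hab, hcont, hga, hgb, -⟩ := hpath
  set S := γ '' Set.Icc a b ∩ Θ with hSdef
  have hS : S.Countable := by
    refine hcnt.mono ?_
    rw [Set.inter_univ]
    exact subset_closure
  have hsub : Set.Ico (0:ℝ) r ⊆ (fun x => dist x z) '' S := by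
    rintro s ⟨hs0, hsr⟩
    have hfc : ContinuousOn (fun t => dist (γ t) z) (Set.Icc a b) :=
      (continuous_id.dist continuous_const).comp_continuousOn hcont
    have := intermediate_value_Icc hab hfc
    have hmem : s ∈ Set.Icc (dist (γ a) z) (dist (γ b) z) := by
      rw [hga, hgb, dist_self]
      exact ⟨hs0, le_of_lt (lt_of_lt_of_le hsr (min_le_right _ _))⟩
    obtain ⟨t, ht, hts⟩ := this hmem
    simp only [] at hts
    refine ⟨γ t, ⟨Set.mem_image_of_mem _ ht, hball ?_⟩, hts⟩
    rw [Metric.mem_ball, hts]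
    exact lt_of_lt_of_le hsr (min_le_left _ _)
  have hIco : (Set.Ico (0:ℝ) r).Countable := (hS.image _).mono hsub
  have := hIco.measure_zero (volume : Measure ℝ)
  rw [Real.volume_Ico] at this
  simp only [ENNReal.ofReal_eq_zero, sub_zero] at this
  exact absurd this (not_le.mpr hr0)
end

section
/- Let (M, d) be a metric space, Θ₀ ⊆ Θ ⊆ M with Θ permeable relative to (M, d) and Θ₀ closed in M. Then Θ \ Θ₀ is permeable relative to the metric subspace (M \ Θ₀, d). -/
open Set MeasureTheory ENNReal

/-!
As `Θ ∖ Θ₀ ⊆ Θ`, it suffices to show that `Θ` is permeable relative to the open set `Θ₀ᶜ`.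
A finite-length path `γ` in an open set `N` has compact trace, so a whole `ρ`-neighbourhood of
the trace lies in `N`. Cut `γ` into pieces of variation less than `ρ / 2` and replace each piece,
using the permeability of `Θ` in the whole space, by a path that is almost as short and meets `Θ`
in a set with countable closure. These replacements are shorter than `ρ`, so they stay in `N`,
and their concatenation is at most slightly longer than `γ`.
-/

open scoped NNReal

section Variation

variable {α E : Type*} [LinearOrder α] [PseudoEMetricSpace E]

theorem eVariationOn_Icc_add_Icc (f : α → E) {a b c : α} (hab : a ≤ b) (hbc : b ≤ c) :
    eVariationOn f (Icc a b) + eVariationOn f (Icc b c) = eVariationOn f (Icc a c) := by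
  simpa using eVariationOn.Icc_add_Icc f (s := univ) hab hbc (mem_univ b)

theorem eVariationOn_Icc_le_add (f : α → E) (a b c : α) :
    eVariationOn f (Icc a c) ≤ eVariationOn f (Icc a b) + eVariationOn f (Icc b c) := by
  rcases le_total a b with hab | hba
  · rcases le_total b c with hbc | hcb
    · exact (eVariationOn_Icc_add_Icc f hab hbc).ge
    · exact (eVariationOn.mono f (Icc_subset_Icc_right hcb)).trans le_self_add
  · exact (eVariationOn.mono f (Icc_subset_Icc_left hba)).trans le_add_self

end Variation

theorem image_Icc_add_const_sub (a b s : ℝ) : (· + s) '' Icc (a - s) (b - s) = Icc a b := by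
  rw [image_add_const_Icc, sub_add_cancel, sub_add_cancel]

theorem image_Icc_comp_add_const {α : Type*} (γ : ℝ → α) (a b s : ℝ) :
    (fun t => γ (t + s)) '' Icc (a - s) (b - s) = γ '' Icc a b := by
  rw [← image_Icc_add_const_sub a b s, image_image]

section Paths

variable {M : Type*} [MetricSpace M] {E : Set M} {γ γ₁ γ₂ : ℝ → M} {a b c d : ℝ} {x y z : M}

theorem IsPathIn.comp_add_const (h : IsPathIn E γ a b x y) (s : ℝ) :
    IsPathIn E (fun t => γ (t + s)) (a - s) (b - s) x y := by
  obtain ⟨hab, hcont, rfl, rfl, hmem⟩ := h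
  have hmaps : MapsTo (· + s) (Icc (a - s) (b - s)) (Icc a b) := fun t ht =>
    ⟨by linarith [ht.1], by linarith [ht.2]⟩
  exact ⟨by linarith, hcont.comp (continuous_add_const s).continuousOn hmaps,
    by simp, by simp, fun t ht => hmem _ (hmaps ht)⟩

theorem pathLength_comp_add_const (γ : ℝ → M) (a b s : ℝ) :
    pathLength (fun t => γ (t + s)) (a - s) (b - s) = pathLength γ a b := by
  rw [pathLength, pathLength, ← image_Icc_add_const_sub a b s]
  exact eVariationOn.comp_eq_of_monotoneOn γ (· + s) fun _ _ _ _ h => by simpa using h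

theorem edist_le_pathLength (h : IsPathIn E γ a b x y) {t : ℝ} (ht : t ∈ Icc a b) :
    edist (γ t) x ≤ pathLength γ a b :=
  h.2.2.1 ▸ eVariationOn.edist_le γ ht (left_mem_Icc.2 h.1)

theorem IsPathIn.exists_append (h₁ : IsPathIn E γ₁ a b x y) (h₂ : IsPathIn E γ₂ c d y z) :
    ∃ γ e, IsPathIn E γ a e x z ∧
      pathLength γ a e = pathLength γ₁ a b + pathLength γ₂ c d ∧
      γ '' Icc a e = γ₁ '' Icc a b ∪ γ₂ '' Icc c d := by
  -- translate `γ₂` so that it starts at time `b`, then glue at `b`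
  set s := c - b
  set σ : ℝ → M := fun t => γ₂ (t + s)
  set e := d - s
  have h₂' : IsPathIn E σ b e y z := by
    simpa [s, sub_sub_cancel] using h₂.comp_add_const s
  obtain ⟨hab, hcont₁, rfl, rfl, hmem₁⟩ := h₁
  obtain ⟨hbe, hcont₂, hσb, rfl, hmem₂⟩ := h₂'
  set γ : ℝ → M := fun t => if t ≤ b then γ₁ t else σ t
  have hsplit : Icc a e = Icc a b ∪ Icc b e := (Icc_union_Icc_eq_Icc hab hbe).symm
  have heq₁ : EqOn γ γ₁ (Icc a b) := fun t ht => if_pos ht.2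
  have heq₂ : EqOn γ σ (Icc b e) := fun t ht => by
    rcases ht.1.eq_or_lt with rfl | hbt
    · simp [γ, hσb]
    · simp [γ, not_le.2 hbt]
  have hσimg : σ '' Icc b e = γ₂ '' Icc c d := by
    simpa [s, e, sub_sub_cancel] using image_Icc_comp_add_const γ₂ c d s
  have hσlen : pathLength σ b e = pathLength γ₂ c d := by
    simpa [s, e, sub_sub_cancel] using pathLength_comp_add_const γ₂ c d s
  refine ⟨γ, e, ⟨hab.trans hbe, ?_, heq₁ (left_mem_Icc.2 hab), heq₂ (right_mem_Icc.2 hbe), ?_⟩,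
    ?_, ?_⟩
  · rw [hsplit]
    exact (hcont₁.congr heq₁).union_of_isClosed (hcont₂.congr heq₂) isClosed_Icc isClosed_Icc
  · rw [hsplit]
    rintro t (ht | ht)
    · exact heq₁ ht ▸ hmem₁ t ht
    · exact heq₂ ht ▸ hmem₂ t ht
  · rw [← hσlen, pathLength, pathLength, pathLength, ← eVariationOn_Icc_add_Icc γ hab hbe,
      eVariationOn.eq_of_eqOn heq₁, eVariationOn.eq_of_eqOn heq₂]
  · rw [hsplit, image_union, heq₁.image_eq, heq₂.image_eq, hσimg]

end Paths

open Filter Topology in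
theorem exists_pos_forall_eVariationOn_Icc_lt {E : Type*} [PseudoEMetricSpace E] {f : ℝ → E}
    {a b : ℝ} (hf : ContinuousOn f (Icc a b)) (hV : eVariationOn f (Icc a b) ≠ ⊤) {η : ℝ≥0∞}
    (hη : 0 < η) :
    ∃ δ > 0, ∀ s ∈ Icc a b, ∀ t ∈ Icc a b, s ≤ t → t - s ≤ δ → eVariationOn f (Icc s t) < η := by
  have hnear : ∀ x ∈ Icc a b,
      {y | eVariationOn f (Icc y x) < η / 2 ∧ eVariationOn f (Icc x y) < η / 2} ∈ 𝓝[Icc a b] x := by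
    intro x hx
    have hη2 : Iio (η / 2) ∈ 𝓝 (0 : ℝ≥0∞) := Iio_mem_nhds (ENNReal.half_pos hη.ne')
    have hleft := (BoundedVariationOn.tendsto_eVariationOn_Icc_zero_left hV
      ((hf x hx).mono inter_subset_left)) hη2
    have hright := (BoundedVariationOn.tendsto_eVariationOn_Icc_zero_right hV x
      ((hf x hx).mono inter_subset_left)) hη2
    filter_upwards [hleft, hright, self_mem_nhdsWithin] with y hyl hyr hy
    constructor
    · rwa [← inter_eq_right.2 (Icc_subset_Icc hy.1 hx.2)]
    · rwa [← inter_eq_right.2 (Icc_subset_Icc hx.1 hy.2)]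
  obtain ⟨δ, hδ, hleb⟩ :=
    Metric.uniformity_basis_dist.lebesgue_number_lemma_nhdsWithin isCompact_Icc hnear
  refine ⟨δ / 2, half_pos hδ, fun s hs t ht hst hts => ?_⟩
  obtain ⟨x, hx⟩ := hleb s hs
  have hsx := hx ⟨show dist s s < δ by simpa using hδ, hs⟩
  have htx := hx ⟨show dist s t < δ by
    rw [dist_comm, Real.dist_eq, abs_of_nonneg (by linarith)]; linarith, ht⟩
  calc eVariationOn f (Icc s t) ≤ eVariationOn f (Icc s x) + eVariationOn f (Icc x t) :=
        eVariationOn_Icc_le_add f s x t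
    _ < η / 2 + η / 2 := ENNReal.add_lt_add hsx.1 htx.2
    _ = η := ENNReal.add_halves η

theorem Real.rel_of_trans_of_forall_sub_le {R : ℝ → ℝ → Prop} {a b δ : ℝ} (hδ : 0 < δ)
    (hab : a ≤ b) (htrans : ∀ s m t, s ≤ m → m ≤ t → R s m → R m t → R s t)
    (hsmall : ∀ s t, a ≤ s → s ≤ t → t ≤ b → t - s ≤ δ → R s t) : R a b := by
  suffices h : ∀ n : ℕ, ∀ s, a ≤ s → s ≤ b → b - s ≤ n * δ → R s b by
    obtain ⟨n, hn⟩ := exists_nat_ge ((b - a) / δ)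
    exact h n a le_rfl hab (by rwa [div_le_iff₀ hδ] at hn)
  intro n
  induction n with
  | zero => exact fun s hs hsb hbs => hsmall s b hs hsb le_rfl (by simp at hbs; linarith)
  | succ n ih =>
    intro s hs hsb hbs
    by_cases hclose : b - s ≤ δ
    · exact hsmall s b hs hsb le_rfl hclose
    · push_cast at hbs
      exact htrans s (s + δ) b (by linarith) (by linarith)
        (hsmall s (s + δ) hs (by linarith) (by linarith) (by linarith))
        (ih (s + δ) (by linarith) (by linarith) (by linarith))

section Permeability

variable {M : Type*} [MetricSpace M] {N Θ Θ' : Set M} {γ : ℝ → M} {a b : ℝ} {x y z : M}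
  {L L₁ L₂ : ℝ≥0∞}

/-- Unlike in `thetaDistIn`, the closure is taken in the whole space. -/
def ThetaPathLE (N Θ : Set M) (x y : M) (L : ℝ≥0∞) : Prop :=
  ∃ σ a b, IsPathIn N σ a b x y ∧ (closure (σ '' Icc a b ∩ Θ)).Countable ∧ pathLength σ a b ≤ L

theorem ThetaPathLE.refl (hx : x ∈ N) : ThetaPathLE N Θ x x 0 := by
  refine ⟨fun _ => x, 0, 0, ⟨le_rfl, continuousOn_const, rfl, rfl, fun _ _ => hx⟩, ?_, ?_⟩
  · refine (countable_singleton x).mono ?_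
    rw [← closure_singleton]
    exact closure_mono (inter_subset_left.trans (by simp))
  · simp [pathLength]

theorem ThetaPathLE.mono (h : ThetaPathLE N Θ x y L₁) (hL : L₁ ≤ L₂) : ThetaPathLE N Θ x y L₂ :=
  let ⟨σ, a, b, hσ, hcount, hlen⟩ := h
  ⟨σ, a, b, hσ, hcount, hlen.trans hL⟩

theorem ThetaPathLE.trans (h₁ : ThetaPathLE N Θ x y L₁) (h₂ : ThetaPathLE N Θ y z L₂) :
    ThetaPathLE N Θ x z (L₁ + L₂) := by
  obtain ⟨σ₁, a₁, b₁, hσ₁, hcount₁, hlen₁⟩ := h₁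
  obtain ⟨σ₂, a₂, b₂, hσ₂, hcount₂, hlen₂⟩ := h₂
  obtain ⟨σ, e, hσ, hlen, himg⟩ := hσ₁.exists_append hσ₂
  refine ⟨σ, a₁, e, hσ, ?_, hlen ▸ add_le_add hlen₁ hlen₂⟩
  rw [himg, union_inter_distrib_right, closure_union]
  exact hcount₁.union hcount₂

theorem thetaDistIn_le_of_thetaPathLE (h : ThetaPathLE N Θ x y L) (hL : L < ⊤) :
    thetaDistIn N Θ x y ≤ L :=
  let ⟨σ, a, b, hσ, hcount, hlen⟩ := h
  le_trans (sInf_le ⟨σ, a, b, hσ, hlen.trans_lt hL, hcount.mono inter_subset_left, rfl⟩) hlen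

theorem intrinsicDist_le_pathLength (hγ : IsPathIn N γ a b x y) (hfin : pathLength γ a b < ⊤) :
    intrinsicDist N x y ≤ pathLength γ a b :=
  sInf_le ⟨γ, a, b, hγ, hfin, rfl⟩

theorem intrinsicDist_le_thetaDistIn : intrinsicDist N x y ≤ thetaDistIn N Θ x y :=
  sInf_le_sInf fun _ ⟨γ, a, b, hγ, hfin, _, hlen⟩ => ⟨γ, a, b, hγ, hfin, hlen⟩

theorem PermeableIn.mono (h : PermeableIn N Θ) (hΘ' : Θ' ⊆ Θ) : PermeableIn N Θ' := by
  intro x hx y hy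
  refine le_antisymm ?_ intrinsicDist_le_thetaDistIn
  rw [← h x hx y hy]
  exact sInf_le_sInf fun _ ⟨γ, a, b, hγ, hfin, hcount, hlen⟩ =>
    ⟨γ, a, b, hγ, hfin, hcount.mono (inter_subset_inter_left _ (closure_mono
      (inter_subset_inter_right _ hΘ'))), hlen⟩

theorem Permeable.thetaPathLE_of_ball_subset (hΘ : Permeable Θ) {ρ : ℝ}
    (hball : Metric.ball x ρ ⊆ N) (hlt : intrinsicDist univ x y < L) (hLρ : L ≤ ENNReal.ofReal ρ) :
    ThetaPathLE N Θ x y L := by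
  rw [← hΘ x (mem_univ x) y (mem_univ y), thetaDistIn, sInf_lt_iff] at hlt
  obtain ⟨_, ⟨σ, a, b, hσ, -, hcount, rfl⟩, hlen⟩ := hlt
  have hnear : ∀ t ∈ Icc a b, σ t ∈ Metric.ball x ρ := fun t ht => by
    rw [Metric.mem_ball, ← edist_lt_ofReal]
    exact (edist_le_pathLength hσ ht).trans_lt (hlen.trans_le hLρ)
  obtain ⟨hab, hcont, hσa, hσb, -⟩ := hσ
  exact ⟨σ, a, b, ⟨hab, hcont, hσa, hσb, fun t ht => hball (hnear t ht)⟩,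
    by rwa [inter_univ] at hcount, hlen.le⟩

theorem Permeable.thetaPathLE_eVariationOn_add (hΘ : Permeable Θ) {ρ s t : ℝ} {β : ℝ≥0∞}
    (hball : Metric.ball (γ s) ρ ⊆ N) (hst : s ≤ t) (hcont : ContinuousOn γ (Icc s t))
    (hβ : 0 < β) (hρ : eVariationOn γ (Icc s t) + β ≤ ENNReal.ofReal ρ) :
    ThetaPathLE N Θ (γ s) (γ t) (eVariationOn γ (Icc s t) + β) := by
  have hfin : eVariationOn γ (Icc s t) < ⊤ :=
    (le_self_add.trans hρ).trans_lt ENNReal.ofReal_lt_top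
  refine hΘ.thetaPathLE_of_ball_subset hball ?_ hρ
  calc intrinsicDist univ (γ s) (γ t) ≤ eVariationOn γ (Icc s t) :=
        intrinsicDist_le_pathLength (N := univ) ⟨hst, hcont, rfl, rfl, fun _ _ => mem_univ _⟩ hfin
    _ < _ := ENNReal.lt_add_right hfin.ne hβ.ne'

theorem Permeable.thetaPathLE_pathLength_add (hΘ : Permeable Θ) (hN : IsOpen N)
    (hγ : IsPathIn N γ a b x y) (hfin : pathLength γ a b < ⊤) {ε : ℝ≥0} (hε : 0 < ε) :
    ThetaPathLE N Θ x y (pathLength γ a b + ε) := by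
  obtain ⟨hab, hcont, rfl, rfl, hmem⟩ := hγ
  obtain ⟨ρ, hρ, hthick⟩ := IsCompact.exists_thickening_subset_open
    (isCompact_Icc.image_of_continuousOn hcont) hN (image_subset_iff.2 hmem)
  obtain ⟨δ, hδ, hsmall⟩ := exists_pos_forall_eVariationOn_Icc_lt hcont hfin.ne
    (ENNReal.ofReal_pos.2 (half_pos hρ))
  -- the error allowed on `[s, t]` is `c * (t - s)`, so that it adds up under concatenation
  set c : ℝ := ε / (b - a + 1)
  have hc : 0 < c := div_pos hε (by linarith)
  let R (s t : ℝ) : Prop := ThetaPathLE N Θ (γ s) (γ t)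
    (eVariationOn γ (Icc s t) + ENNReal.ofReal (c * (t - s)))
  have hR : R a b := by
    refine Real.rel_of_trans_of_forall_sub_le (δ := min δ (ρ / 2 / c)) (by positivity) hab ?_ ?_
    · intro s m t hsm hmt hsm' hmt'
      refine (hsm'.trans hmt').mono (le_of_eq ?_)
      rw [add_add_add_comm, eVariationOn_Icc_add_Icc γ hsm hmt,
        ← ENNReal.ofReal_add (by nlinarith) (by nlinarith)]
      ring_nf
    · intro s t has hst htb hts
      have hs : s ∈ Icc a b := ⟨has, hst.trans htb⟩
      rcases hst.eq_or_lt with rfl | hst'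
      · exact (ThetaPathLE.refl (hmem s hs)).mono zero_le
      have hV := hsmall s hs t ⟨has.trans hst, htb⟩ hst (hts.trans (min_le_left _ _))
      have hbudget : c * (t - s) ≤ ρ / 2 := by
        have := hts.trans (min_le_right _ _)
        rw [le_div_iff₀ hc] at this
        linarith
      refine hΘ.thetaPathLE_eVariationOn_add
        ((Metric.ball_subset_thickening (mem_image_of_mem γ hs) ρ).trans hthick) hst
        (hcont.mono (Icc_subset_Icc has htb)) (ENNReal.ofReal_pos.2 (by nlinarith)) ?_
      calc _ ≤ ENNReal.ofReal (ρ / 2) + ENNReal.ofReal (ρ / 2) :=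
            add_le_add hV.le (ENNReal.ofReal_le_ofReal hbudget)
        _ = ENNReal.ofReal ρ := by rw [← ENNReal.ofReal_add (by positivity) (by positivity),
            add_halves]
  refine ThetaPathLE.mono hR (add_le_add le_rfl ?_)
  rw [← ENNReal.ofReal_coe_nnreal]
  refine ENNReal.ofReal_le_ofReal ?_
  rw [div_mul_eq_mul_div, div_le_iff₀ (by linarith)]
  nlinarith [ε.coe_nonneg]

theorem Permeable.permeableIn_of_isOpen (hΘ : Permeable Θ) (hN : IsOpen N) : PermeableIn N Θ := by
  intro x _ y _
  refine le_antisymm (le_sInf ?_) intrinsicDist_le_thetaDistIn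
  rintro _ ⟨γ, a, b, hγ, hfin, rfl⟩
  refine ENNReal.le_of_forall_pos_le_add fun ε hε _ => ?_
  exact thetaDistIn_le_of_thetaPathLE (hΘ.thetaPathLE_pathLength_add hN hγ hfin hε)
    (ENNReal.add_lt_top.2 ⟨hfin, ENNReal.coe_lt_top⟩)

end Permeability

theorem stmt5_general {M : Type*} [MetricSpace M] (Θ₀ Θ : Set M)
    (hΘ : Permeable Θ) (hΘ₀ : IsClosed Θ₀) :
    PermeableIn Θ₀ᶜ (Θ \ Θ₀) :=
  (hΘ.permeableIn_of_isOpen hΘ₀.isOpen_compl).mono sdiff_subset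

/-- If `Θ` is permeable relative to `M` and `Θ₀ ⊆ Θ` is closed, then `Θ \ Θ₀` is permeable
relative to the subspace `M \ Θ₀`. -/
theorem stmt5 {M : Type*} [MetricSpace M] (Θ₀ Θ : Set M) (hsub : Θ₀ ⊆ Θ)
    (hΘ : Permeable Θ) (hΘ₀ : IsClosed Θ₀) :
    PermeableIn Θ₀ᶜ (Θ \ Θ₀) :=
  stmt5_general Θ₀ Θ hΘ hΘ₀
end

section
/- A subset Θ ⊆ ℝ has countable closure if and only if for every interval I ⊆ ℝ and every function f : I → ℝ, if f is continuous on I and the restriction of f to I \ Θ is Lipschitz continuous with respect to the intrinsic metric on I \ Θ, then f is Lipschitz continuous on I. -/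
/-!
If `closure Θ` is countable, `x < y` and `g t = L * t - f t` had `g y < g x`, pick a level
`v ∈ (g y, g x)` outside the countable set `g '' closure Θ`. Continuous induction from `x` then
gets stuck at a point `t` with `g t = v`, so `t ∉ closure Θ`; but near such a point `f` is
`L`-Lipschitz on `[t, t + ε]`, so `g` does not drop below `v` to the right of `t`.

Conversely, an uncountable closed set `closure Θ` carries an atomless probability measure `μ`.
Its distribution function `F` is continuous, not constant, and constant on every interval missing
`Θ`; so is `√|F - F a|` for each `a`, which is thus intrinsically `0`-Lipschitz off `Θ`. If it were
Lipschitz, then `|F x - F a| = O((x - a) ^ 2)`, so `F' ≡ 0` and `F` would be constant.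
-/

open Set MeasureTheory ENNReal

open Topology Filter ProbabilityTheory

theorem image_le_of_eventually_le_off_countable {g : ℝ → ℝ} {a b : ℝ} {C : Set ℝ}
    (hab : a ≤ b) (hC : C.Countable) (hg : ContinuousOn g (Icc a b))
    (hloc : ∀ t ∈ Ico a b \ C, ∀ᶠ u in 𝓝[>] t, g t ≤ g u) : g a ≤ g b := by
  by_contra! hba
  obtain ⟨v, hvC, hbv, hva⟩ := ((hC.image g).dense_compl ℝ).exists_between hba
  have hsub : Icc a b ⊆ g ⁻¹' Ici v := by
    refine IsClosed.Icc_subset_of_forall_mem_nhdsWithin ?_ hva.le fun t ⟨hvt, ht⟩ => ?_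
    · rw [inter_comm]
      exact hg.preimage_isClosed_of_isClosed isClosed_Icc isClosed_Ici
    rcases (show v ≤ g t from hvt).lt_or_eq with hvt | hvt
    · have hcont : ContinuousWithinAt g (Ioi t) t :=
        (hg t (Ico_subset_Icc_self ht)).mono_of_mem_nhdsWithin (Icc_mem_nhdsGT_of_mem ht)
      exact hcont.preimage_mem_nhdsWithin (Ici_mem_nhds hvt)
    · have htC : t ∉ C := fun htC => hvC ⟨t, htC, hvt.symm⟩
      filter_upwards [hloc t ⟨ht, htC⟩] with u hu
      exact hvt.trans_le hu
  exact (hsub (right_mem_Icc.2 hab)).not_gt hbv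

theorem intrinsicDist_le_of_Icc_subset {E : Set ℝ} {p q : ℝ} (hpq : p ≤ q) (h : Icc p q ⊆ E) :
    intrinsicDist E p q ≤ ENNReal.ofReal (q - p) := by
  have hlen : pathLength id p q = ENNReal.ofReal (q - p) := by
    have := (monotoneOn_id (s := Icc p q)).eVariationOn_eq (left_mem_Icc.2 hpq)
      (right_mem_Icc.2 hpq)
    rwa [inter_self] at this
  refine sInf_le ⟨id, p, q, ⟨hpq, continuousOn_id, rfl, rfl, fun t ht => h ht⟩, ?_, hlen⟩
  exact hlen ▸ ENNReal.ofReal_lt_top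

theorem uIcc_subset_of_intrinsicDist_lt_top {E : Set ℝ} {x y : ℝ}
    (h : intrinsicDist E x y < ⊤) : uIcc x y ⊆ E := by
  obtain ⟨-, ⟨γ, a, b, ⟨hab, hγ, rfl, rfl, hγE⟩, -⟩, -⟩ := sInf_lt_iff.1 h
  have hconn : (γ '' Icc a b).OrdConnected := (isPreconnected_Icc.image γ hγ).ordConnected
  refine (hconn.uIcc_subset (mem_image_of_mem γ (left_mem_Icc.2 hab))
    (mem_image_of_mem γ (right_mem_Icc.2 hab))).trans ?_
  rintro _ ⟨t, ht, rfl⟩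
  exact hγE t ht

theorem dist_le_mul_of_Icc_subset {E : Set ℝ} {f : ℝ → ℝ} {L : NNReal}
    (hL : ∀ x ∈ E, ∀ y ∈ E, intrinsicDist E x y < ⊤ →
      edist (f x) (f y) ≤ L * intrinsicDist E x y)
    {p q : ℝ} (hpq : p ≤ q) (h : Icc p q ⊆ E) : |f q - f p| ≤ L * (q - p) := by
  have hd := intrinsicDist_le_of_Icc_subset hpq h
  have hfq := hL p (h (left_mem_Icc.2 hpq)) q (h (right_mem_Icc.2 hpq))
    (hd.trans_lt ENNReal.ofReal_lt_top)
  have hfq' : edist (f p) (f q) ≤ ENNReal.ofReal (L * (q - p)) :=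
    calc _ ≤ L * intrinsicDist E p q := hfq
      _ ≤ L * ENNReal.ofReal (q - p) := by gcongr
      _ = _ := by rw [ENNReal.ofReal_mul L.coe_nonneg, ENNReal.ofReal_coe_nnreal]
  rw [edist_dist, ENNReal.ofReal_le_ofReal_iff (by nlinarith [L.coe_nonneg])] at hfq'
  rwa [Real.dist_eq, abs_sub_comm] at hfq'

theorem eventually_abs_sub_le_of_notMem_closure {Θ I : Set ℝ} {f : ℝ → ℝ} {L : NNReal}
    (hI : I.OrdConnected)
    (hL : ∀ x ∈ I \ Θ, ∀ y ∈ I \ Θ, intrinsicDist (I \ Θ) x y < ⊤ →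
      edist (f x) (f y) ≤ L * intrinsicDist (I \ Θ) x y)
    {x y t : ℝ} (hx : x ∈ I) (hy : y ∈ I) (ht : t ∈ Ico x y) (htΘ : t ∉ closure Θ) :
    ∀ᶠ u in 𝓝[>] t, |f u - f t| ≤ L * (u - t) := by
  obtain ⟨m, htm, hm⟩ := exists_Ico_subset_of_mem_nhds
    (inter_mem (isClosed_closure.isOpen_compl.mem_nhds htΘ) (Iio_mem_nhds ht.2)) ⟨y, ht.2⟩
  filter_upwards [Ioo_mem_nhdsGT htm] with u hu
  refine dist_le_mul_of_Icc_subset hL hu.1.le fun w hw => ?_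
  obtain ⟨hwΘ, hwy⟩ := hm ⟨hw.1, hw.2.trans_lt hu.2⟩
  exact ⟨hI.out hx hy ⟨ht.1.trans hw.1, le_of_lt hwy⟩, fun h => hwΘ (subset_closure h)⟩

theorem lipschitzOnWith_of_intrinsic_lipschitz_of_countable_closure {Θ I : Set ℝ} {f : ℝ → ℝ}
    {L : NNReal} (hΘ : (closure Θ).Countable) (hI : I.OrdConnected) (hf : ContinuousOn f I)
    (hL : ∀ x ∈ I \ Θ, ∀ y ∈ I \ Θ, intrinsicDist (I \ Θ) x y < ⊤ →
      edist (f x) (f y) ≤ L * intrinsicDist (I \ Θ) x y) :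
    LipschitzOnWith L f I := by
  have key : ∀ x ∈ I, ∀ y ∈ I, x ≤ y → |f y - f x| ≤ L * (y - x) := by
    intro x hx y hy hxy
    have hfxy : ContinuousOn f (Icc x y) := hf.mono (hI.out hx hy)
    have hloc : ∀ t ∈ Ico x y \ closure Θ, ∀ᶠ u in 𝓝[>] t, |f u - f t| ≤ L * (u - t) :=
      fun t ht => eventually_abs_sub_le_of_notMem_closure hI hL hx hy ht.1 ht.2
    have hup := image_le_of_eventually_le_off_countable (g := fun t => L * t - f t) hxy hΘ
      ((continuousOn_const.mul continuousOn_id).sub hfxy)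
      fun t ht => (hloc t ht).mono fun u hu => by linarith [abs_le.1 hu]
    have hdown := image_le_of_eventually_le_off_countable (g := fun t => L * t + f t) hxy hΘ
      ((continuousOn_const.mul continuousOn_id).add hfxy)
      fun t ht => (hloc t ht).mono fun u hu => by linarith [abs_le.1 hu]
    exact abs_le.2 ⟨by linarith, by linarith⟩
  refine LipschitzOnWith.of_le_add_mul L fun x hx y hy => ?_
  rcases le_total x y with hxy | hyx
  · have := key x hx y hy hxy
    rw [Real.dist_eq, abs_of_nonpos (sub_nonpos.2 hxy)]
    linarith [abs_le.1 this]
  · have := key y hy x hx hyx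
    rw [Real.dist_eq, abs_of_nonneg (sub_nonneg.2 hyx)]
    linarith [abs_le.1 this]

theorem IsClosed.exists_isProbabilityMeasure_nullSingletonClass_of_not_countable
    {α : Type*} [TopologicalSpace α] [PolishSpace α] [MeasurableSpace α] [BorelSpace α]
    {C : Set α} (hC : IsClosed C) (hCu : ¬C.Countable) :
    ∃ ν : Measure α, IsProbabilityMeasure ν ∧ NullSingletonClass ν ∧ ν Cᶜ = 0 := by
  have : PolishSpace C := hC.polishSpace
  let e : C ≃ᵐ ℝ := PolishSpace.measurableEquivOfNotCountable
    (fun h => hCu (Set.countable_coe_iff.1 h)) not_countable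
  let j : ℝ → α := fun x => e.symm x
  have hj : Measurable j := measurable_subtype_coe.comp e.symm.measurable
  have hj_inj : j.Injective := Subtype.coe_injective.comp e.symm.injective
  let μ : Measure ℝ := volume.restrict (Icc 0 1)
  have : IsProbabilityMeasure μ := ⟨by simp [μ]⟩
  refine ⟨μ.map j, Measure.isProbabilityMeasure_map hj.aemeasurable, ⟨fun x => ?_⟩, ?_⟩
  · rw [Measure.map_apply hj (measurableSet_singleton x)]
    exact (Set.subsingleton_singleton.preimage hj_inj).measure_zero μ
  · rw [Measure.map_apply hj hC.isOpen_compl.measurableSet]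
    convert measure_empty (μ := μ)
    exact eq_empty_iff_forall_notMem.2 fun x hx => hx (e.symm x).2

theorem ProbabilityTheory.continuous_cdf (μ : Measure ℝ) [IsProbabilityMeasure μ]
    [NullSingletonClass μ] : Continuous (cdf μ) := by
  refine continuous_iff_continuousAt.2 fun x =>
    (cdf μ).mono.continuousAt_iff_leftLim_eq_rightLim.2 ?_
  have hx := (cdf μ).measure_singleton x
  rw [measure_cdf, measure_singleton, eq_comm, ENNReal.ofReal_eq_zero, sub_nonpos] at hx
  rw [(cdf μ).rightLim_eq]
  exact le_antisymm ((cdf μ).mono.leftLim_le le_rfl) hx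

theorem ProbabilityTheory.cdf_eq_of_measure_Ioo_eq_zero {μ : Measure ℝ}
    [IsProbabilityMeasure μ] [NullSingletonClass μ] {x y : ℝ} (hxy : x ≤ y) (h : μ (Ioo x y) = 0) :
    cdf μ x = cdf μ y := by
  have hIoc := (cdf μ).measure_Ioc x y
  rw [measure_cdf, ← measure_congr Ioo_ae_eq_Ioc, h, eq_comm, ENNReal.ofReal_eq_zero,
    sub_nonpos] at hIoc
  exact le_antisymm ((cdf μ).mono hxy) hIoc

theorem ProbabilityTheory.not_forall_cdf_eq (μ : Measure ℝ) [IsProbabilityMeasure μ] :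
    ¬∀ x y, cdf μ x = cdf μ y := by
  intro h
  have h0 := (tendsto_cdf_atBot μ).congr fun x => h x 0
  have h1 := (tendsto_cdf_atTop μ).congr fun x => h x 0
  rw [tendsto_const_nhds_iff] at h0 h1
  exact zero_ne_one (h0.symm.trans h1)

theorem ProbabilityTheory.cdf_eq_of_uIcc_subset_compl {μ : Measure ℝ}
    [IsProbabilityMeasure μ] [NullSingletonClass μ] {Θ : Set ℝ} (hμ : μ (closure Θ)ᶜ = 0) {x y : ℝ}
    (h : uIcc x y ⊆ Θᶜ) :
    cdf μ x = cdf μ y := by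
  wlog hxy : x ≤ y generalizing x y
  · exact (this (uIcc_comm x y ▸ h) (le_of_not_ge hxy)).symm
  rw [uIcc_of_le hxy] at h
  have hdisj : Disjoint (Ioo x y) Θ :=
    subset_compl_iff_disjoint_right.1 (Ioo_subset_Icc_self.trans h)
  exact cdf_eq_of_measure_Ioo_eq_zero hxy
    (measure_mono_null (subset_compl_iff_disjoint_right.2 (hdisj.closure_right isOpen_Ioo)) hμ)

theorem hasDerivAt_zero_of_lipschitzWith_sqrt_abs_sub {f : ℝ → ℝ} {a : ℝ} {K : NNReal}
    (h : LipschitzWith K fun x => √|f x - f a|) : HasDerivAt f 0 a := by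
  have hsq : ∀ x, |f x - f a| ≤ K ^ 2 * ‖x - a‖ ^ 2 := fun x => by
    have := h.dist_le_mul x a
    simp only [sub_self, abs_zero, Real.sqrt_zero, Real.dist_eq, sub_zero,
      abs_of_nonneg (Real.sqrt_nonneg _)] at this
    calc |f x - f a| = √|f x - f a| ^ 2 := (Real.sq_sqrt (abs_nonneg _)).symm
      _ ≤ (K * |x - a|) ^ 2 := by gcongr
      _ = K ^ 2 * ‖x - a‖ ^ 2 := by rw [Real.norm_eq_abs]; ring
  have : (fun x => f x - f a) =O[𝓝 a] fun x => ‖x - a‖ ^ 2 :=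
    Asymptotics.IsBigO.of_bound _ (Eventually.of_forall fun x => by simpa using hsq x)
  simpa using (this.hasFDerivAt (𝕜 := ℝ) one_lt_two).hasDerivAt

/-- One-dimensional permeability criterion: `Θ ⊆ ℝ` has countable closure iff every function
on an interval which is continuous and intrinsically Lipschitz with exception set `Θ` is
Lipschitz. -/
theorem stmt10 (Θ : Set ℝ) :
    (closure Θ).Countable ↔
      ∀ I : Set ℝ, I.OrdConnected → ∀ f : ℝ → ℝ, ContinuousOn f I →
        (∃ L : NNReal, ∀ x ∈ I \ Θ, ∀ y ∈ I \ Θ, intrinsicDist (I \ Θ) x y < ⊤ →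
          edist (f x) (f y) ≤ L * intrinsicDist (I \ Θ) x y) →
        ∃ L' : NNReal, LipschitzOnWith L' f I := by
  constructor
  · rintro hΘ I hI f hf ⟨L, hL⟩
    exact ⟨L, lipschitzOnWith_of_intrinsic_lipschitz_of_countable_closure hΘ hI hf hL⟩
  intro hLip
  by_contra hΘ
  obtain ⟨μ, _, _, hμ⟩ :=
    isClosed_closure.exists_isProbabilityMeasure_nullSingletonClass_of_not_countable hΘ
  have hgap : ∀ x y, intrinsicDist (univ \ Θ) x y < ⊤ → cdf μ x = cdf μ y := fun x y hd =>
    cdf_eq_of_uIcc_subset_compl hμ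
      (compl_eq_univ_sdiff Θ ▸ uIcc_subset_of_intrinsicDist_lt_top hd)
  have hflat : ∀ a, HasDerivAt (cdf μ) 0 a := by
    intro a
    obtain ⟨K, hK⟩ := hLip univ ordConnected_univ (fun x => √|cdf μ x - cdf μ a|)
      ((continuous_cdf μ).sub continuous_const).abs.sqrt.continuousOn
      ⟨0, fun x _ y _ hd => by simp [hgap x y hd]⟩
    exact hasDerivAt_zero_of_lipschitzWith_sqrt_abs_sub (lipschitzOnWith_univ.1 hK)
  exact not_forall_cdf_eq μ (is_const_of_deriv_eq_zero (fun a => (hflat a).differentiableAt)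
    fun a => (hflat a).deriv)
end

section
/- Let M = [0,1]² with the euclidean metric and Θ = ([0,1] \ ℚ)². Then Θ is not permeable: specifically, there exists ε > 0 such that every path γ in M from (0,0) to (1,1) with length ℓ(γ) < √2 + ε intersects Θ in uncountably many points. -/
open Set MeasureTheory ENNReal

/-
Every point of `[0,1]² \ Θ` has a rational coordinate. So if a path `γ` from `(0,0)` to `(1,1)`
meets `Θ` only countably often, then at every time either its `x`-coordinate lies in the
countable set `D = ℚ ∪ x(γ ∩ Θ)` or its `y`-coordinate lies in `ℚ`. Parametrize `γ` by arc length
on `[0, L]`, so that both coordinates `φ, ψ` are `1`-Lipschitz. A Lipschitz function has derivative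
`0` at almost every point where it takes values in a countable set, so `id - φ`, which is monotone
and increases by `L - 1`, grows at unit rate on `φ⁻¹(D)`; hence `|φ⁻¹(D)| ≤ L - 1`, and likewise
`|ψ⁻¹(ℚ)| ≤ L - 1`. These sets cover `[0, L]`, so `L ≤ 2(L - 1)`, i.e. `L ≥ 2 > √2`. The straight
segment has length `√2`, so `Θ` is not permeable.
-/

open Filter Topology
open scoped NNReal

theorem countable_setOf_mem_not_accPt {α : Type*} [LinearOrder α] [TopologicalSpace α]
    [OrderTopology α] [SecondCountableTopology α] (C : Set α) :
    {x ∈ C | ¬AccPt x (𝓟 C)}.Countable := by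
  refine (countable_setOfPred_isolated_right_within (s := C)).mono ?_
  rintro x ⟨hxC, hx⟩
  refine ⟨hxC, ?_⟩
  rw [accPt_principal_iff_nhdsWithin] at hx
  by_contra h
  exact hx ((Filter.neBot_iff.2 h).mono (nhdsWithin_mono x fun y hy => ⟨hy.1, hy.2.ne'⟩))

theorem HasDerivAt.eq_zero_of_accPt {f : ℝ → ℝ} {f' x : ℝ} {C : Set ℝ} (hf : HasDerivAt f f' x)
    (hC : ∀ y ∈ C, f y = f x) (hx : AccPt x (𝓟 C)) : f' = 0 :=
  hx.uniqueDiffWithinAt.eq_deriv C hf.hasDerivWithinAt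
    ((hasDerivWithinAt_const x C (f x)).congr hC rfl)

theorem ae_hasDerivAt_eq_zero_of_mem_countable {φ : ℝ → ℝ} {D : Set ℝ} (hD : D.Countable) :
    ∀ᵐ x, φ x ∈ D → ∀ d, HasDerivAt φ d x → d = 0 := by
  -- Off a countable set, every point of a level set of `φ` accumulates in that level set.
  have hnull : ∀ᵐ x, x ∉ ⋃ c ∈ D, {x ∈ φ ⁻¹' {c} | ¬AccPt x (𝓟 (φ ⁻¹' {c}))} :=
    (hD.biUnion fun c _ => countable_setOf_mem_not_accPt _).ae_notMem _
  filter_upwards [hnull] with x hx hxD d hd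
  refine hd.eq_zero_of_accPt (C := φ ⁻¹' {φ x}) (fun y hy => hy) ?_
  by_contra h
  exact hx (mem_biUnion hxD ⟨rfl, h⟩)

theorem LipschitzWith.monotone_id_sub {φ : ℝ → ℝ} (hφ : LipschitzWith 1 φ) :
    Monotone fun t => t - φ t := by
  intro s t hst
  have h := hφ.dist_le_mul t s
  rw [NNReal.coe_one, one_mul, Real.dist_eq, Real.dist_eq, abs_of_nonneg (sub_nonneg.2 hst)] at h
  linarith [le_abs_self (φ t - φ s)]

theorem LipschitzWith.volume_Ioc_inter_preimage_countable_le {φ : ℝ → ℝ} (hφ : LipschitzWith 1 φ)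
    {D : Set ℝ} (hD : D.Countable) (a b : ℝ) :
    volume (Ioc a b ∩ φ ⁻¹' D) ≤ ENNReal.ofReal (b - a - (φ b - φ a)) := by
  -- `F = id - φ` is monotone, and its Stieltjes measure has density `1 - φ' = 1` on `φ ⁻¹' D`.
  let F : StieltjesFunction ℝ :=
    ⟨fun t => t - φ t, hφ.monotone_id_sub,
      fun _ => (continuous_id.sub hφ.continuous).continuousWithinAt⟩
  have hF : ∀ᵐ x, φ x ∈ D → F.measure.rnDeriv volume x = 1 := by
    filter_upwards [F.ae_hasDerivAt, F.measure.rnDeriv_lt_top volume,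
      ae_hasDerivAt_eq_zero_of_mem_countable hD] with x hFx hfin hφx hxD
    have hφ' : HasDerivAt φ (1 - (F.measure.rnDeriv volume x).toReal) x :=
      ((hasDerivAt_id x).sub hFx).congr_of_eventuallyEq
        (Eventually.of_forall fun y => (sub_sub_cancel y (φ y)).symm)
    have := hφx hxD _ hφ'
    exact (ENNReal.toReal_eq_one_iff _).1 (by linarith)
  have hmeas : MeasurableSet (Ioc a b ∩ φ ⁻¹' D) :=
    measurableSet_Ioc.inter (hD.measurableSet.preimage hφ.continuous.measurable)
  calc volume (Ioc a b ∩ φ ⁻¹' D) = ∫⁻ _ in Ioc a b ∩ φ ⁻¹' D, 1 := (setLIntegral_one _).symm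
    _ = ∫⁻ x in Ioc a b ∩ φ ⁻¹' D, F.measure.rnDeriv volume x := by
      refine setLIntegral_congr_fun_ae hmeas ?_
      filter_upwards [hF] with x hx hxs using (hx hxs.2).symm
    _ ≤ F.measure (Ioc a b ∩ φ ⁻¹' D) := Measure.setLIntegral_rnDeriv_le _
    _ ≤ F.measure (Ioc a b) := measure_mono inter_subset_left
    _ = ENNReal.ofReal (b - a - (φ b - φ a)) := by
      rw [F.measure_Ioc]
      congr 1
      show b - φ b - (a - φ a) = _
      ring

theorem sub_add_sub_le_of_forall_mem_or_mem {φ ψ : ℝ → ℝ} (hφ : LipschitzWith 1 φ)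
    (hψ : LipschitzWith 1 ψ) {D E : Set ℝ} (hD : D.Countable) (hE : E.Countable) {a b : ℝ}
    (hab : a ≤ b) (hcover : ∀ t ∈ Ioc a b, φ t ∈ D ∨ ψ t ∈ E) :
    (φ b - φ a) + (ψ b - ψ a) ≤ b - a := by
  have hφab := hφ.monotone_id_sub hab
  have hψab := hψ.monotone_id_sub hab
  have hvol : ENNReal.ofReal (b - a) ≤
      ENNReal.ofReal (b - a - (φ b - φ a) + (b - a - (ψ b - ψ a))) :=
    calc ENNReal.ofReal (b - a) = volume (Ioc a b) := Real.volume_Ioc.symm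
      _ ≤ volume (Ioc a b ∩ φ ⁻¹' D ∪ Ioc a b ∩ ψ ⁻¹' E) :=
        measure_mono fun t ht => (hcover t ht).imp (⟨ht, ·⟩) (⟨ht, ·⟩)
      _ ≤ volume (Ioc a b ∩ φ ⁻¹' D) + volume (Ioc a b ∩ ψ ⁻¹' E) := measure_union_le _ _
      _ ≤ ENNReal.ofReal (b - a - (φ b - φ a)) + ENNReal.ofReal (b - a - (ψ b - ψ a)) :=
        add_le_add (hφ.volume_Ioc_inter_preimage_countable_le hD a b)
          (hψ.volume_Ioc_inter_preimage_countable_le hE a b)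
      _ = _ := (ENNReal.ofReal_add (by linarith) (by linarith)).symm
  have := (ENNReal.ofReal_le_ofReal_iff (by linarith)).1 hvol
  linarith

theorem LocallyBoundedVariationOn.continuousOn_variationOnFromTo {α E : Type*} [LinearOrder α]
    [TopologicalSpace α] [OrderTopology α] [PseudoMetricSpace E] {f : α → E} {s : Set α}
    (hf : LocallyBoundedVariationOn f s) (hc : ContinuousOn f s) {a : α} (ha : a ∈ s) :
    ContinuousOn (variationOnFromTo f s a) s := by
  intro x hx
  have hleft := variationOnFromTo.tendsto_left ha hx hf
    ((hc x hx).mono inter_subset_left).tendsto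
  have hright := variationOnFromTo.tendsto_right ha hx hf
    ((hc x hx).mono inter_subset_left).tendsto
  rw [dist_self, sub_zero] at hleft
  rw [dist_self, add_zero] at hright
  refine ContinuousWithinAt.mono ?_ (fun y hy => ?_ : s ⊆ insert x (s ∩ Iio x ∪ s ∩ Ioi x))
  · exact continuousWithinAt_insert_self.2 (ContinuousWithinAt.union hleft hright)
  · rcases lt_trichotomy y x with h | rfl | h
    · exact Or.inr (Or.inl ⟨hy, h⟩)
    · exact Or.inl rfl
    · exact Or.inr (Or.inr ⟨hy, h⟩)

theorem HasConstantSpeedOnWith.lipschitzOnWith {E : Type*} [PseudoEMetricSpace E] {f : ℝ → E}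
    {s : Set ℝ} {l : ℝ≥0} (h : HasConstantSpeedOnWith f s l) : LipschitzOnWith l f s := by
  have hle : ∀ x ∈ s, ∀ y ∈ s, x ≤ y → edist (f x) (f y) ≤ l * edist x y := by
    intro x hx y hy hxy
    calc edist (f x) (f y) ≤ eVariationOn f (s ∩ Icc x y) :=
          eVariationOn.edist_le f ⟨hx, le_rfl, hxy⟩ ⟨hy, hxy, le_rfl⟩
      _ = ENNReal.ofReal (l * (y - x)) := h hx hy
      _ = l * edist x y := by
        rw [ENNReal.ofReal_mul (NNReal.coe_nonneg l), ofReal_coe_nnreal, edist_comm, edist_dist,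
          Real.dist_eq, abs_of_nonneg (sub_nonneg.2 hxy)]
  intro x hx y hy
  rcases le_total x y with hxy | hyx
  · exact hle x hx y hy hxy
  · rw [edist_comm, edist_comm x]
    exact hle y hy x hx hyx

theorem exists_lipschitzOnWith_one_reparam {X : Type*} [MetricSpace X] {f : ℝ → X} {a b : ℝ}
    (hab : a ≤ b) (hf : ContinuousOn f (Icc a b)) (hfin : eVariationOn f (Icc a b) ≠ ⊤) :
    ∃ Γ : ℝ → X, LipschitzOnWith 1 Γ (Icc 0 (eVariationOn f (Icc a b)).toReal) ∧
      Γ '' Icc 0 (eVariationOn f (Icc a b)).toReal = f '' Icc a b ∧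
      Γ 0 = f a ∧ Γ (eVariationOn f (Icc a b)).toReal = f b := by
  have ha : a ∈ Icc a b := left_mem_Icc.2 hab
  have hb : b ∈ Icc a b := right_mem_Icc.2 hab
  have hloc : LocallyBoundedVariationOn f (Icc a b) := fun x y _ _ =>
    ((eVariationOn.mono f inter_subset_left).trans_lt hfin.lt_top).ne
  have hρa : variationOnFromTo f (Icc a b) a a = 0 := variationOnFromTo.self f _ a
  have hρb : variationOnFromTo f (Icc a b) a b = (eVariationOn f (Icc a b)).toReal := by
    rw [variationOnFromTo.eq_of_le f _ hab, inter_self]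
  have hρ : variationOnFromTo f (Icc a b) a '' Icc a b =
      Icc 0 (eVariationOn f (Icc a b)).toReal := by
    rw [← hρa, ← hρb]
    exact ((variationOnFromTo.monotoneOn hloc ha).image_Icc_subset).antisymm
      (intermediate_value_Icc hab (hloc.continuousOn_variationOnFromTo hf ha))
  have hΓρ : ∀ t ∈ Icc a b,
      naturalParameterization f (Icc a b) a (variationOnFromTo f (Icc a b) a t) = f t :=
    fun t ht => edist_eq_zero.1 (edist_naturalParameterization_eq_zero hloc ha ht)
  refine ⟨naturalParameterization f (Icc a b) a, ?_, ?_, ?_, ?_⟩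
  · rw [← hρ]
    exact (has_unit_speed_naturalParameterization f hloc ha).lipschitzOnWith
  · rw [← hρ, image_image]
    exact image_congr hΓρ
  · rw [← hρa, hΓρ a ha]
  · rw [← hρb, hΓρ b hb]

theorem sub_add_sub_le_eVariationOn {X : Type*} [MetricSpace X] {f g : X → ℝ}
    (hf : LipschitzWith 1 f) (hg : LipschitzWith 1 g) {D E : Set ℝ} (hD : D.Countable)
    (hE : E.Countable) {γ : ℝ → X} {a b : ℝ} (hab : a ≤ b) (hγ : ContinuousOn γ (Icc a b))
    (hcover : ∀ z ∈ γ '' Icc a b, f z ∈ D ∨ g z ∈ E) :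
    ENNReal.ofReal ((f (γ b) - f (γ a)) + (g (γ b) - g (γ a))) ≤ eVariationOn γ (Icc a b) := by
  by_cases hfin : eVariationOn γ (Icc a b) = ⊤
  · exact hfin ▸ le_top
  obtain ⟨Γ, hΓ, himage, hΓa, hΓb⟩ := exists_lipschitzOnWith_one_reparam hab hγ hfin
  set L := (eVariationOn γ (Icc a b)).toReal
  obtain ⟨φ, hφ, hφΓ⟩ := (hf.comp_lipschitzOnWith hΓ).extend_real
  obtain ⟨ψ, hψ, hψΓ⟩ := (hg.comp_lipschitzOnWith hΓ).extend_real
  rw [one_mul] at hφ hψ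
  have hL : 0 ≤ L := ENNReal.toReal_nonneg
  have hcoverΓ : ∀ t ∈ Ioc 0 L, φ t ∈ D ∨ ψ t ∈ E := by
    intro t ht
    rw [← hφΓ (Ioc_subset_Icc_self ht), ← hψΓ (Ioc_subset_Icc_self ht)]
    exact hcover _ (himage ▸ mem_image_of_mem Γ (Ioc_subset_Icc_self ht))
  have := sub_add_sub_le_of_forall_mem_or_mem hφ hψ hD hE hL hcoverΓ
  rw [← hφΓ (left_mem_Icc.2 hL), ← hφΓ (right_mem_Icc.2 hL), ← hψΓ (left_mem_Icc.2 hL),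
    ← hψΓ (right_mem_Icc.2 hL)] at this
  simp only [Function.comp_apply, hΓa, hΓb, sub_zero] at this
  rw [← ENNReal.ofReal_toReal hfin]
  exact ENNReal.ofReal_le_ofReal this

theorem intrinsicDist_le_edist_of_segment_subset {E : Type*} [NormedAddCommGroup E]
    [NormedSpace ℝ E] {N : Set E} {x y : E} (h : segment ℝ x y ⊆ N) :
    intrinsicDist N x y ≤ edist x y := by
  have hlen : pathLength (AffineMap.lineMap x y : ℝ → E) 0 1 ≤ edist x y :=
    calc eVariationOn (AffineMap.lineMap x y ∘ id) (Icc (0 : ℝ) 1)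
        ≤ nndist x y * eVariationOn id (Icc (0 : ℝ) 1) :=
          (lipschitzWith_lineMap x y).lipschitzOnWith.comp_eVariationOn_le (mapsTo_id _)
      _ = edist x y := by rw [eVariationOn_id_Icc, sub_zero, ofReal_one, mul_one, edist_nndist]
  have hpath : IsPathIn N (AffineMap.lineMap x y : ℝ → E) 0 1 x y :=
    ⟨zero_le_one, (AffineMap.lineMap_continuous).continuousOn, AffineMap.lineMap_apply_zero x y,
      AffineMap.lineMap_apply_one x y,
      fun t ht => h (segment_eq_image_lineMap ℝ x y ▸ mem_image_of_mem _ ht)⟩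
  exact sInf_le_of_le ⟨_, 0, 1, hpath, hlen.trans_lt (edist_lt_top x y), rfl⟩ hlen

def unitSquare : Set (EuclideanSpace ℝ (Fin 2)) :=
  {p | p 0 ∈ Icc (0 : ℝ) 1 ∧ p 1 ∈ Icc (0 : ℝ) 1}

def irrationalSquare : Set (EuclideanSpace ℝ (Fin 2)) :=
  {p | p 0 ∈ Icc (0 : ℝ) 1 \ range ((↑) : ℚ → ℝ) ∧ p 1 ∈ Icc (0 : ℝ) 1 \ range ((↑) : ℚ → ℝ)}

theorem convex_unitSquare : Convex ℝ unitSquare :=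
  ((convex_Icc 0 1).linear_preimage (EuclideanSpace.proj (0 : Fin 2)).toLinearMap).inter
    ((convex_Icc 0 1).linear_preimage (EuclideanSpace.proj (1 : Fin 2)).toLinearMap)

theorem edist_toLp_zero_toLp_one :
    edist (WithLp.toLp 2 ![0, 0] : EuclideanSpace ℝ (Fin 2)) (WithLp.toLp 2 ![1, 1]) =
      ENNReal.ofReal (Real.sqrt 2) := by
  rw [edist_dist, EuclideanSpace.dist_eq, Fin.sum_univ_two]
  norm_num

theorem two_le_pathLength_of_countable_inter_irrationalSquare {γ : ℝ → EuclideanSpace ℝ (Fin 2)}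
    {a b : ℝ} (hγ : IsPathIn unitSquare γ a b (WithLp.toLp 2 ![0, 0]) (WithLp.toLp 2 ![1, 1]))
    (hcount : (γ '' Icc a b ∩ irrationalSquare).Countable) :
    ENNReal.ofReal 2 ≤ pathLength γ a b := by
  obtain ⟨hab, hcont, hγa, hγb, hmem⟩ := hγ
  have hcoord (i : Fin 2) : LipschitzWith 1 fun z : EuclideanSpace ℝ (Fin 2) => z i :=
    LipschitzWith.of_edist_le fun x y => PiLp.edist_apply_le x y i
  have hcover : ∀ z ∈ γ '' Icc a b,
      z 0 ∈ range ((↑) : ℚ → ℝ) ∪ (· 0) '' (γ '' Icc a b ∩ irrationalSquare) ∨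
        z 1 ∈ range ((↑) : ℚ → ℝ) := by
    rintro z hz
    by_cases hzΘ : z ∈ irrationalSquare
    · exact Or.inl (Or.inr ⟨z, ⟨hz, hzΘ⟩, rfl⟩)
    obtain ⟨t, ht, rfl⟩ := hz
    obtain ⟨h0, h1⟩ := hmem t ht
    by_contra! hrat
    exact hzΘ ⟨⟨h0, fun h => hrat.1 (Or.inl h)⟩, ⟨h1, hrat.2⟩⟩
  have := sub_add_sub_le_eVariationOn (hcoord 0) (hcoord 1)
    ((countable_range _).union (hcount.image _)) (countable_range _) hab hcont hcover
  rw [hγa, hγb] at this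
  show ENNReal.ofReal 2 ≤ eVariationOn γ (Icc a b)
  convert this using 2
  norm_num

/-- In `M = [0,1]²`, the set `Θ = ([0,1] \ ℚ)²` is not permeable: there is `ε > 0` such that
every path in `M` from `(0,0)` to `(1,1)` of length less than `√2 + ε` meets `Θ` in
uncountably many points. In particular `Θ` is not permeable relative to `M`. -/
theorem stmt13
    (Msq : Set (EuclideanSpace ℝ (Fin 2)))
    (hM : Msq = {p | p 0 ∈ Set.Icc (0 : ℝ) 1 ∧ p 1 ∈ Set.Icc (0 : ℝ) 1})
    (Θ : Set (EuclideanSpace ℝ (Fin 2)))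
    (hΘ : Θ = {p | p 0 ∈ Set.Icc (0 : ℝ) 1 \ Set.range ((↑) : ℚ → ℝ) ∧
                   p 1 ∈ Set.Icc (0 : ℝ) 1 \ Set.range ((↑) : ℚ → ℝ)})
    (p q : EuclideanSpace ℝ (Fin 2)) (hp : p = WithLp.toLp 2 ![0, 0]) (hq : q = WithLp.toLp 2 ![1, 1]) :
    (∃ ε > (0 : ℝ), ∀ (γ : ℝ → EuclideanSpace ℝ (Fin 2)) (a b : ℝ),
      IsPathIn Msq γ a b p q → pathLength γ a b < ENNReal.ofReal (Real.sqrt 2 + ε) →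
        ¬ (γ '' Set.Icc a b ∩ Θ).Countable) ∧
    ¬ PermeableIn Msq Θ := by
  change Msq = unitSquare at hM
  change Θ = irrationalSquare at hΘ
  subst hM hΘ hp hq
  have hsqrt : Real.sqrt 2 < 2 := by
    rw [Real.sqrt_lt' two_pos]
    norm_num
  have hpM : WithLp.toLp 2 ![0, 0] ∈ unitSquare := by simp [unitSquare]
  have hqM : WithLp.toLp 2 ![1, 1] ∈ unitSquare := by simp [unitSquare]
  refine ⟨⟨2 - Real.sqrt 2, sub_pos.2 hsqrt, fun γ a b hγ hlen hcount => ?_⟩, fun hperm => ?_⟩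
  · rw [add_sub_cancel] at hlen
    exact (two_le_pathLength_of_countable_inter_irrationalSquare hγ hcount).not_gt hlen
  · have hθ : ENNReal.ofReal 2 ≤ thetaDistIn unitSquare irrationalSquare
        (WithLp.toLp 2 ![0, 0]) (WithLp.toLp 2 ![1, 1]) := by
      refine le_sInf ?_
      rintro _ ⟨γ, a, b, hγ, -, hclosure, rfl⟩
      refine two_le_pathLength_of_countable_inter_irrationalSquare hγ (hclosure.mono ?_)
      rintro _ ⟨⟨t, ht, rfl⟩, hΘ⟩
      exact ⟨subset_closure ⟨⟨t, ht, rfl⟩, hΘ⟩, hγ.2.2.2.2 t ht⟩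
    have hintr :=
      intrinsicDist_le_edist_of_segment_subset (convex_unitSquare.segment_subset hpM hqM)
    rw [← hperm _ hpM _ hqM, edist_toLp_zero_toLp_one] at hintr
    exact hsqrt.not_ge ((ENNReal.ofReal_le_ofReal_iff (Real.sqrt_nonneg 2)).1 (hθ.trans hintr))
end

section
/- Let Θ ⊆ ℝ^d be a Lebesgue null set. Then for all x, y ∈ ℝ^d and all ε > 0 there exists a polygonal chain γ : [a,b] → ℝ^d from x to y with ℓ(γ) < ‖y - x‖ + ε such that the set {t ∈ [a,b] : γ(t) ∈ Θ} has one-dimensional Lebesgue measure zero. -/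
open Set MeasureTheory ENNReal

/-- `γ` restricted to `[a,b]` is a polygonal chain: there is a partition of `[a,b]` on whose
subintervals `γ` is an affine parametrization of a segment. -/
def IsPolygonalChainOn {E : Type*} [NormedAddCommGroup E] [NormedSpace ℝ E]
    (γ : ℝ → E) (a b : ℝ) : Prop :=
  ∃ (n : ℕ) (t : Fin (n + 1) → ℝ), StrictMono t ∧ t 0 = a ∧ t (Fin.last n) = b ∧
    ∀ (k : Fin n), ∀ s ∈ Set.Icc (t k.castSucc) (t k.succ),
      γ s = γ (t k.castSucc) + ((s - t k.castSucc) / (t k.succ - t k.castSucc)) •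
        (γ (t k.succ) - γ (t k.castSucc))

/-!
For a fixed `p`, apply Fubini to the set of `(z, t)` with `p + t • (z - p) ∈ Θ`: for `t ≠ 0`
its slice in `z` is the image of `Θ` under a homothety, hence null, so for almost every `z` the
line from `p` through `z` meets `Θ` in a null set of parameters. Since null sets have dense
complement, there is a point `z` arbitrarily close to `x` that is good for both `x` and `y`, and
the broken line `x → z → y` is the required chain.
-/

open AffineMap Metric

section LineMapNull

variable {E : Type*} [NormedAddCommGroup E] [NormedSpace ℝ E] [MeasurableSpace E]
  [BorelSpace E] [FiniteDimensional ℝ E] (μ : Measure E) [μ.IsAddHaarMeasure]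

theorem measure_setOf_lineMap_mem_eq_zero {Θ : Set E} (hΘ : μ Θ = 0) (p : E) {t : ℝ}
    (ht : t ≠ 0) : μ {z | lineMap p z t ∈ Θ} = 0 := by
  refine measure_mono_null (t := homothety p t⁻¹ '' Θ)
    (fun z hz => ⟨lineMap p z t, hz, ?_⟩) ?_
  · rw [← homothety_eq_lineMap, ← homothety_mul_apply, inv_mul_cancel₀ ht, homothety_one,
      AffineMap.id_apply]
  · rw [Measure.addHaar_image_homothety, hΘ, mul_zero]

theorem ae_volume_preimage_lineMap_eq_zero {Θ : Set E} (hΘ : μ Θ = 0) (p : E) :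
    ∀ᵐ z ∂μ, volume (lineMap p z ⁻¹' Θ : Set ℝ) = 0 := by
  obtain ⟨Θ', hΘΘ', hΘ'm, hΘ'⟩ := exists_measurable_superset_of_null hΘ
  let s : Set (E × ℝ) := {q | lineMap p q.1 q.2 ∈ Θ'}
  have hs : MeasurableSet s :=
    (continuous_const.lineMap continuous_fst continuous_snd).measurable hΘ'm
  have hs_null : (μ.prod volume) s = 0 := by
    rw [Measure.prod_apply_symm hs]
    refine (lintegral_congr_ae ?_).trans lintegral_zero
    filter_upwards [compl_mem_ae_iff.2 (measure_singleton (0 : ℝ))] with t ht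
    exact measure_setOf_lineMap_mem_eq_zero μ hΘ' p ht
  filter_upwards [Measure.measure_ae_null_of_prod_null hs_null] with z hz
  exact measure_mono_null (preimage_mono hΘΘ') hz

end LineMapNull

theorem LipschitzOnWith.eVariationOn_Icc_le {E : Type*} [PseudoEMetricSpace E] {f : ℝ → E}
    {C : NNReal} {a b : ℝ} (hf : LipschitzOnWith C f (Icc a b)) :
    eVariationOn f (Icc a b) ≤ C * ENNReal.ofReal (b - a) := by
  simpa [eVariationOn_id_Icc] using hf.comp_eVariationOn_le (mapsTo_id _)

section TwoSegmentPath

variable {E : Type*} [NormedAddCommGroup E] [NormedSpace ℝ E]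

noncomputable def twoSegmentPath (x z y : E) (t : ℝ) : E :=
  if t ≤ 1 then lineMap x z t else lineMap y z (2 - t)

variable (x z y : E)

theorem twoSegmentPath_eqOn_Icc_zero_one :
    EqOn (twoSegmentPath x z y) (lineMap x z) (Icc 0 1) :=
  fun _ ht => if_pos ht.2

theorem twoSegmentPath_eqOn_Icc_one_two :
    EqOn (twoSegmentPath x z y) (fun t => lineMap y z (2 - t)) (Icc 1 2) := by
  intro t ht
  rcases ht.1.eq_or_lt with rfl | h
  · norm_num [twoSegmentPath]
  · exact if_neg h.not_ge

theorem twoSegmentPath_zero : twoSegmentPath x z y 0 = x := by simp [twoSegmentPath]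

theorem twoSegmentPath_one : twoSegmentPath x z y 1 = z := by simp [twoSegmentPath]

theorem twoSegmentPath_two : twoSegmentPath x z y 2 = y := by norm_num [twoSegmentPath]

theorem isPolygonalChainOn_twoSegmentPath : IsPolygonalChainOn (twoSegmentPath x z y) 0 2 := by
  refine ⟨2, fun i => (i : ℝ), fun i j h => Nat.cast_lt.mpr h, by simp, by norm_num, ?_⟩
  intro k s hs
  fin_cases k
  · norm_num at hs ⊢
    rw [twoSegmentPath_eqOn_Icc_zero_one x z y hs, twoSegmentPath_zero, twoSegmentPath_one,
      lineMap_apply_module']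
    module
  · norm_num at hs ⊢
    rw [twoSegmentPath_eqOn_Icc_one_two x z y hs, twoSegmentPath_one, twoSegmentPath_two]
    dsimp only
    rw [lineMap_apply_module']
    module

theorem pathLength_twoSegmentPath_le :
    pathLength (twoSegmentPath x z y) 0 2 ≤ edist x z + edist y z := by
  have h₁ : eVariationOn (twoSegmentPath x z y) (Icc 0 1) ≤ edist x z := by
    rw [eVariationOn.eq_of_eqOn (twoSegmentPath_eqOn_Icc_zero_one x z y)]
    simpa using ((lipschitzWith_lineMap x z).lipschitzOnWith (s := Icc 0 1)).eVariationOn_Icc_le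
  have h₂ : eVariationOn (twoSegmentPath x z y) (Icc 1 2) ≤ edist y z := by
    rw [eVariationOn.eq_of_eqOn (twoSegmentPath_eqOn_Icc_one_two x z y)]
    have hlip : LipschitzWith (nndist y z) fun t : ℝ => lineMap y z (2 - t) := by
      simpa [Function.comp_def] using
        (lipschitzWith_lineMap y z).comp ((LipschitzWith.const (2 : ℝ)).sub LipschitzWith.id)
    simpa [show (2 : ℝ) - 1 = 1 by norm_num] using
      (hlip.lipschitzOnWith (s := Icc 1 2)).eVariationOn_Icc_le
  have hsplit := eVariationOn.Icc_add_Icc (twoSegmentPath x z y) zero_le_one one_le_two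
    (mem_univ 1)
  simp only [univ_inter] at hsplit
  rw [pathLength, ← hsplit]
  exact add_le_add h₁ h₂

theorem volume_preimage_twoSegmentPath_eq_zero {Θ : Set E}
    (hx : volume (lineMap x z ⁻¹' Θ : Set ℝ) = 0)
    (hy : volume (lineMap y z ⁻¹' Θ : Set ℝ) = 0) :
    volume (twoSegmentPath x z y ⁻¹' Θ) = 0 := by
  have hsub :
      twoSegmentPath x z y ⁻¹' Θ ⊆ lineMap x z ⁻¹' Θ ∪ (2 - ·) ⁻¹' (lineMap y z ⁻¹' Θ) := by
    intro t ht
    rw [mem_preimage, twoSegmentPath] at ht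
    split_ifs at ht
    exacts [Or.inl ht, Or.inr ht]
  refine measure_mono_null hsub (measure_union_null hx ?_)
  rwa [(Measure.measurePreserving_sub_left volume 2).measure_preimage (.of_null hy)]

end TwoSegmentPath

/-- For a Lebesgue null set `Θ ⊆ ℝ^d`, any two points can be joined by a polygonal chain of
length less than `‖y - x‖ + ε` whose parameter set hitting `Θ` is a (1-dimensional) null set. -/
theorem stmt14 {d : ℕ} (Θ : Set (EuclideanSpace ℝ (Fin d))) (hΘ : volume Θ = 0)
    (x y : EuclideanSpace ℝ (Fin d)) (ε : ℝ) (hε : 0 < ε) :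
    ∃ (γ : ℝ → EuclideanSpace ℝ (Fin d)) (a b : ℝ), a ≤ b ∧
      IsPolygonalChainOn γ a b ∧ γ a = x ∧ γ b = y ∧
      pathLength γ a b < ENNReal.ofReal (‖y - x‖ + ε) ∧
      volume {t ∈ Set.Icc a b | γ t ∈ Θ} = 0 := by
  have hgood := (ae_volume_preimage_lineMap_eq_zero volume hΘ x).and
    (ae_volume_preimage_lineMap_eq_zero volume hΘ y)
  obtain ⟨z, hzx, hxz, hyz⟩ := Metric.dense_iff.1 (Measure.dense_of_ae hgood) x _ (half_pos hε)
  refine ⟨twoSegmentPath x z y, 0, 2, zero_le_two, isPolygonalChainOn_twoSegmentPath x z y,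
    twoSegmentPath_zero x z y, twoSegmentPath_two x z y, ?_, ?_⟩
  · have hdist : dist x z + dist y z < ‖y - x‖ + ε := by
      rw [mem_ball, dist_comm] at hzx
      linarith [dist_triangle y x z, dist_eq_norm y x]
    calc pathLength (twoSegmentPath x z y) 0 2 ≤ edist x z + edist y z :=
          pathLength_twoSegmentPath_le x z y
      _ = ENNReal.ofReal (dist x z + dist y z) := by
          rw [edist_dist, edist_dist, ofReal_add dist_nonneg dist_nonneg]
      _ < ENNReal.ofReal (‖y - x‖ + ε) := (ofReal_lt_ofReal_iff (by positivity)).2 hdist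
  · exact measure_mono_null (fun t ht => ht.2)
      (volume_preimage_twoSegmentPath_eq_zero x z y hxz hyz)
end
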